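/- arXiv:2403.14936 — 8 statements merged into one kernel-verified Lean document; each statement's English description precedes it below -/
import Mathlib

section
/- Let A be a (multiplicative) free monoid algebra over ℚ on an alphabet A₀, and suppose the ℚ-span 𝔷 of A₀ carries a commutative (not necessarily unital) ℚ-bilinear product ∘. Define the harmonic product ∗ on the free algebra 𝔥¹ = ℚ⟨A₀⟩ recursively by 1 ∗ w = w ∗ 1 = w and (a w₁) ∗ (b w₂) = a(w₁ ∗ b w₂) + b(a w₁ ∗ w₂) + (a ∘ b)(w₁ ∗ w₂) for letters a, b and words w₁, w₂. For a parameter r, define the ℚ[r]-linear map S^r on 𝔥¹[r] by S^r(1) = 1 and S^r(a w) = a S^r(w) + r · (a ∘ S^r(w)), where a ∘ (b v) := (a ∘ b) v and a ∘ 1 := 0. Then for any letters a₁, …, aₙ ∈ 𝔷, S^r(a₁ a₂ ⋯ aₙ) = sum over i from 1 to n of r^(i-1) · (a₁ ∘ a₂ ∘ ⋯ ∘ aᵢ) · S^r(a_{i+1} ⋯ aₙ). -/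
/-- The `i`-fold circle product `a₁ ∘ a₂ ∘ ⋯` of a nonempty list of elements
(`0` for the empty list, which is never used). -/
def circFold {Z : Type*} [Zero Z] (c : Z → Z → Z) : List Z → Z
  | [] => 0
  | a :: t => t.foldl c a

/-- Iterated circle powers: `circPow c a i = a^{∘(i+1)}`. -/
def circPow {Z : Type*} (c : Z → Z → Z) (a : Z) : ℕ → Z
  | 0 => a
  | k + 1 => c (circPow c a k) a

/-! Writing `S` for `S^r` and `a₁ ⋯ aₙ` for the word of a list, apply `S (a w) = a S(w) + r (a ∘ S(w))`
to the first letter and expand `S(w)` by induction: since `a ∘ (x v) = (a ∘ x) v`, the operator `a ∘ -`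
prepends `a` to the leading circle product of every term, and raises the power of `r` by one. -/

theorem circFold_cons_cons {Z : Type*} [Zero Z] (c : Z → Z → Z) [Std.Associative c]
    (a b : Z) (t : List Z) : circFold c (a :: b :: t) = c a (circFold c (b :: t)) :=
  List.foldl_assoc

section CircExpansion

variable {R Z H : Type*} [CommSemiring R] [Zero Z] [Semiring H] [Algebra R H]
  (ι : Z → H) (c : Z → Z → Z) (S : H → H) (r : R)

def circExpansion (l : List Z) : H :=
  ∑ i ∈ Finset.range l.length,
    r ^ i • (ι (circFold c (l.take (i + 1))) * S ((l.drop (i + 1)).map ι).prod)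

theorem circExpansion_singleton (a : Z) : circExpansion ι c S r [a] = ι a * S 1 := by
  simp [circExpansion, circFold]

theorem circExpansion_cons_cons [Std.Associative c] (act : Z → H →ₗ[R] H)
    (hact_rec : ∀ (a b : Z) (w : H), act a (ι b * w) = ι (c a b) * w) (a b : Z) (t : List Z) :
    circExpansion ι c S r (a :: b :: t) =
      ι a * S ((b :: t).map ι).prod + r • act a (circExpansion ι c S r (b :: t)) := by
  rw [circExpansion, List.length_cons, Finset.sum_range_succ', add_comm, circExpansion, map_sum,
    Finset.smul_sum]
  congr 1
  · simp [circFold]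
  · refine Finset.sum_congr rfl fun i _ => ?_
    rw [map_smul, hact_rec, smul_smul, ← pow_succ']
    simp only [List.take_succ_cons, List.drop_succ_cons, circFold_cons_cons]

theorem apply_prod_eq_circExpansion [Std.Associative c] (act : Z → H →ₗ[R] H)
    (hact_one : ∀ a : Z, act a 1 = 0)
    (hact_rec : ∀ (a b : Z) (w : H), act a (ι b * w) = ι (c a b) * w)
    (hS_one : S 1 = 1) (hS_rec : ∀ (a : Z) (w : H), S (ι a * w) = ι a * S w + r • act a (S w)) :
    ∀ l : List Z, l ≠ [] → S (l.map ι).prod = circExpansion ι c S r l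
  | [a], _ => by
    simpa [circExpansion_singleton, hS_one, hact_one] using hS_rec a 1
  | a :: b :: t, _ => by
    rw [circExpansion_cons_cons ι c S r act hact_rec, List.map_cons, List.prod_cons, hS_rec,
      apply_prod_eq_circExpansion act hact_one hact_rec hS_one hS_rec (b :: t) (List.cons_ne_nil b t)]

end CircExpansion

theorem Sr_recursion_general
    {Z H : Type*} [AddCommGroup Z] [Module ℚ Z] [Ring H] [Algebra ℚ H]
    (ι : Z →ₗ[ℚ] H)
    (circ : Z →ₗ[ℚ] Z →ₗ[ℚ] Z)
    (hassoc : ∀ a b c : Z, circ (circ a b) c = circ a (circ b c))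
    (act : Z →ₗ[ℚ] H →ₗ[ℚ] H)
    (hact_one : ∀ a : Z, act a 1 = 0)
    (hact_rec : ∀ (a b : Z) (w : H), act a (ι b * w) = ι (circ a b) * w)
    (S : ℚ → H →ₗ[ℚ] H)
    (hS_one : ∀ r : ℚ, S r 1 = 1)
    (hS_rec : ∀ (r : ℚ) (a : Z) (w : H), S r (ι a * w) = ι a * S r w + r • act a (S r w))
    (r : ℚ) (l : List Z) (hl : l ≠ []) :
    S r ((l.map (fun a => ι a)).prod) =
      ∑ i ∈ Finset.range l.length,
        r ^ i • (ι (circFold (fun x y => circ x y) (l.take (i + 1))) *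
          S r (((l.drop (i + 1)).map (fun a => ι a)).prod)) := by
  have : Std.Associative (fun x y => circ x y) := ⟨hassoc⟩
  exact apply_prod_eq_circExpansion ι (fun x y => circ x y) (S r) r (fun a => act a) hact_one
    hact_rec (hS_one r) (hS_rec r) l hl

theorem Sr_recursion
    {Z H : Type*} [AddCommGroup Z] [Module ℚ Z] [Ring H] [Algebra ℚ H]
    (ι : Z →ₗ[ℚ] H)
    (circ : Z →ₗ[ℚ] Z →ₗ[ℚ] Z)
    (hcomm : ∀ a b : Z, circ a b = circ b a)
    (hassoc : ∀ a b c : Z, circ (circ a b) c = circ a (circ b c))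
    (act : Z →ₗ[ℚ] H →ₗ[ℚ] H)
    (hact_one : ∀ a : Z, act a 1 = 0)
    (hact_rec : ∀ (a b : Z) (w : H), act a (ι b * w) = ι (circ a b) * w)
    (S : ℚ → H →ₗ[ℚ] H)
    (hS_one : ∀ r : ℚ, S r 1 = 1)
    (hS_rec : ∀ (r : ℚ) (a : Z) (w : H), S r (ι a * w) = ι a * S r w + r • act a (S r w))
    (r : ℚ) (l : List Z) (hl : l ≠ []) :
    S r ((l.map (fun a => ι a)).prod) =
      ∑ i ∈ Finset.range l.length,
        r ^ i • (ι (circFold (fun x y => circ x y) (l.take (i + 1))) *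
          S r (((l.drop (i + 1)).map (fun a => ι a)).prod)) :=
  Sr_recursion_general ι circ hassoc act hact_one hact_rec S hS_one hS_rec r l hl
end

section
/- In the setting of the harmonic algebra with circle product, for any single letter a ∈ 𝔷 and any positive integer n, S^r(a^n) = sum over i from 1 to n of r^(i-1) · a^(∘i) · S^r(a^(n-i)), where a^(∘i) denotes the i-fold circle product of a with itself and a^k denotes the word of k copies of a. -/
/-! Induction on `n`. In `S^r(a · a^n) = a S^r(a^n) + r (a ∘ S^r(a^n))`, expand `S^r(a^n)` by the
formula for `n`: since `∘` is commutative, `a ∘ -` raises every circle power `a^{∘(i+1)}` to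
`a^{∘(i+2)}`, and the factor `r` raises `r^i` to `r^(i+1)`: the second summand is the old sum shifted by one index, and the
first summand is its new `i = 0` term. -/

theorem circPow_succ' {Z : Type*} {c : Z → Z → Z} (hc : ∀ x y, c x y = c y x) (a : Z) (i : ℕ) :
    circPow c a (i + 1) = c a (circPow c a i) :=
  hc _ _

section

variable {Z H : Type*} [AddCommGroup Z] [Module ℚ Z] [Ring H] [Algebra ℚ H]
  {ι : Z →ₗ[ℚ] H} {circ : Z →ₗ[ℚ] Z →ₗ[ℚ] Z} {act : Z →ₗ[ℚ] H →ₗ[ℚ] H}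

theorem act_sum_smul_mul {κ : Type*}
    (hact_rec : ∀ (a b : Z) (w : H), act a (ι b * w) = ι (circ a b) * w)
    (a : Z) (s : Finset κ) (x : κ → ℚ) (b : κ → Z) (w : κ → H) :
    act a (∑ i ∈ s, x i • (ι (b i) * w i)) = ∑ i ∈ s, x i • (ι (circ a (b i)) * w i) := by
  simp only [map_sum, map_smul, hact_rec]

theorem S_pow_succ (hcomm : ∀ a b : Z, circ a b = circ b a)
    (hact_one : ∀ a : Z, act a 1 = 0)
    (hact_rec : ∀ (a b : Z) (w : H), act a (ι b * w) = ι (circ a b) * w)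
    {S : ℚ → H →ₗ[ℚ] H} (hS_one : ∀ r : ℚ, S r 1 = 1)
    (hS_rec : ∀ (r : ℚ) (a : Z) (w : H), S r (ι a * w) = ι a * S r w + r • act a (S r w))
    (r : ℚ) (a : Z) (m : ℕ) :
    S r (ι a ^ (m + 1)) =
      ∑ i ∈ Finset.range (m + 1),
        r ^ i • (ι (circPow (fun x y => circ x y) a i) * S r (ι a ^ (m - i))) := by
  induction m with
  | zero => simpa [hS_one, hact_one, circPow] using hS_rec r a 1
  | succ m ih =>
    have hshift : r • act a (S r (ι a ^ (m + 1))) =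
        ∑ i ∈ Finset.range (m + 1),
          r ^ (i + 1) •
            (ι (circPow (fun x y => circ x y) a (i + 1)) * S r (ι a ^ (m + 1 - (i + 1)))) := by
      rw [ih, act_sum_smul_mul hact_rec, Finset.smul_sum]
      refine Finset.sum_congr rfl fun i _ => ?_
      rw [smul_smul, ← pow_succ', circPow_succ' (fun x y => hcomm x y), Nat.add_sub_add_right]
    rw [pow_succ', hS_rec, hshift, Finset.sum_range_succ' _ (m + 1), add_comm]
    simp [circPow]

end

theorem Sr_pow_recursion_general
    {Z H : Type*} [AddCommGroup Z] [Module ℚ Z] [Ring H] [Algebra ℚ H]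
    (ι : Z →ₗ[ℚ] H)
    (circ : Z →ₗ[ℚ] Z →ₗ[ℚ] Z)
    (hcomm : ∀ a b : Z, circ a b = circ b a)
    (act : Z →ₗ[ℚ] H →ₗ[ℚ] H)
    (hact_one : ∀ a : Z, act a 1 = 0)
    (hact_rec : ∀ (a b : Z) (w : H), act a (ι b * w) = ι (circ a b) * w)
    (S : ℚ → H →ₗ[ℚ] H)
    (hS_one : ∀ r : ℚ, S r 1 = 1)
    (hS_rec : ∀ (r : ℚ) (a : Z) (w : H), S r (ι a * w) = ι a * S r w + r • act a (S r w))
    (r : ℚ) (a : Z) (n : ℕ) (hn : 1 ≤ n) :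
    S r ((ι a) ^ n) =
      ∑ i ∈ Finset.range n,
        r ^ i • (ι (circPow (fun x y => circ x y) a i) * S r ((ι a) ^ (n - 1 - i))) := by
  obtain ⟨m, rfl⟩ := Nat.exists_eq_add_of_le' hn
  simpa using S_pow_succ hcomm hact_one hact_rec hS_one hS_rec r a m

theorem Sr_pow_recursion
    {Z H : Type*} [AddCommGroup Z] [Module ℚ Z] [Ring H] [Algebra ℚ H]
    (ι : Z →ₗ[ℚ] H)
    (circ : Z →ₗ[ℚ] Z →ₗ[ℚ] Z)
    (hcomm : ∀ a b : Z, circ a b = circ b a)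
    (hassoc : ∀ a b c : Z, circ (circ a b) c = circ a (circ b c))
    (act : Z →ₗ[ℚ] H →ₗ[ℚ] H)
    (hact_one : ∀ a : Z, act a 1 = 0)
    (hact_rec : ∀ (a b : Z) (w : H), act a (ι b * w) = ι (circ a b) * w)
    (S : ℚ → H →ₗ[ℚ] H)
    (hS_one : ∀ r : ℚ, S r 1 = 1)
    (hS_rec : ∀ (r : ℚ) (a : Z) (w : H), S r (ι a * w) = ι a * S r w + r • act a (S r w))
    (r : ℚ) (a : Z) (n : ℕ) (hn : 1 ≤ n) :
    S r ((ι a) ^ n) =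
      ∑ i ∈ Finset.range n,
        r ^ i • (ι (circPow (fun x y => circ x y) a i) * S r ((ι a) ^ (n - 1 - i))) :=
  Sr_pow_recursion_general ι circ hcomm act hact_one hact_rec S hS_one hS_rec r a n hn
end

section
/- In the harmonic algebra setting, for any a ∈ 𝔷 and any positive integer n, the identity S^r(a^n) = sum over i from 0 to n of r^(n-i) * (1-r)^i * (a^i ∗ S(a^(n-i))) holds, where S = S^1 and ∗ is the harmonic product. -/
open Finset

-- For commuting `X`, `Y` the model solution is `A i j = (i + j).choose i • (X ^ i * Y ^ j) v`.
theorem Module.End.smul_add_smul_pow_apply_of_pascal {R M : Type*} [CommSemiring R]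
    [AddCommMonoid M] [Module R M] (X Y : Module.End R M) (α β : R) (A : ℕ → ℕ → M)
    (hX : ∀ i, A (i + 1) 0 = X (A i 0)) (hY : ∀ j, A 0 (j + 1) = Y (A 0 j))
    (hXY : ∀ i j, A (i + 1) (j + 1) = X (A i (j + 1)) + Y (A (i + 1) j)) (n : ℕ) :
    ((α • X + β • Y) ^ n) (A 0 0) = ∑ p ∈ antidiagonal n, (α ^ p.1 * β ^ p.2) • A p.1 p.2 := by
  induction n with
  | zero => simp
  | succ n ih =>
    have hsplit : ∀ p ∈ antidiagonal (n + 1), A p.1 p.2 =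
        (if p.1 = 0 then 0 else X (A (p.1 - 1) p.2)) +
          (if p.2 = 0 then 0 else Y (A p.1 (p.2 - 1))) := by
      rintro ⟨_ | i, _ | j⟩ hp
      · simp at hp
      · simpa using hY j
      · simpa using hX i
      · simpa using hXY i j
    rw [sum_congr rfl fun p hp => by rw [hsplit p hp], sum_congr rfl fun p _ => smul_add _ _ _,
      sum_add_distrib, Nat.sum_antidiagonal_succ, Nat.sum_antidiagonal_succ', pow_succ',
      Module.End.mul_apply, ih]
    simp [map_sum, sum_add_distrib, smul_smul, pow_succ, mul_assoc, mul_comm, mul_left_comm]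

section Harmonic

variable {R Z H : Type*} [CommRing R] [AddCommGroup Z] [Module R Z] [Ring H] [Algebra R H]
  (ι : Z →ₗ[R] H) (circ : Z →ₗ[R] Z →ₗ[R] Z) (act : Z →ₗ[R] H →ₗ[R] H)

-- `act a` is determined by its hypotheses only on this submodule, which contains every `S 1 (x ^ j)`.
def letterSpan : Submodule R H :=
  Submodule.span R (insert 1 (Set.range fun p : Z × H => ι p.1 * p.2))

theorem one_mem_letterSpan : (1 : H) ∈ letterSpan ι :=
  Submodule.subset_span (Set.mem_insert _ _)

theorem mul_mem_letterSpan (b : Z) (w : H) : ι b * w ∈ letterSpan ι :=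
  Submodule.subset_span (Set.mem_insert_of_mem _ ⟨(b, w), rfl⟩)

theorem LinearMap.eqOn_letterSpan {M : Type*} [AddCommMonoid M] [Module R M]
    {f g : H →ₗ[R] M} (h_one : f 1 = g 1) (h_mul : ∀ b w, f (ι b * w) = g (ι b * w)) :
    Set.EqOn f g (letterSpan ι) :=
  LinearMap.eqOn_span <| by
    rintro _ (rfl | ⟨⟨b, w⟩, rfl⟩)
    exacts [h_one, h_mul b w]

theorem mapsTo_mulLeft_add_act_letterSpan (hact_one : ∀ a : Z, act a 1 = 0)
    (hact_rec : ∀ (a b : Z) (w : H), act a (ι b * w) = ι (circ a b) * w) (a : Z) :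
    Set.MapsTo (LinearMap.mulLeft R (ι a) + act a) (letterSpan ι) (letterSpan ι) := by
  intro v hv
  refine Submodule.add_mem _ (mul_mem_letterSpan ι a v) ?_
  refine Submodule.span_induction ?_ (by simp) (fun _ _ _ _ => by simpa using Submodule.add_mem _)
    (fun c _ _ => by simpa using Submodule.smul_mem _ c) hv
  rintro _ (rfl | ⟨⟨b, w⟩, rfl⟩)
  · simp [hact_one]
  · simpa [hact_rec] using mul_mem_letterSpan ι (circ a b) w

theorem S_pow_eq_pow_apply_one (S : R → H →ₗ[R] H) (hS_one : ∀ r : R, S r 1 = 1)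
    (hS_rec : ∀ (r : R) (a : Z) (w : H), S r (ι a * w) = ι a * S r w + r • act a (S r w))
    (r : R) (a : Z) (n : ℕ) :
    S r (ι a ^ n) = ((LinearMap.mulLeft R (ι a) + r • act a) ^ n) 1 := by
  induction n with
  | zero => simp [hS_one]
  | succ n ih => rw [pow_succ', hS_rec, ih, pow_succ', Module.End.mul_apply]; rfl

theorem astar_pow_succ_mul_add_act (astar : H →ₗ[R] H →ₗ[R] H) (hstar_one_right : ∀ w : H, astar w 1 = w)
    (hstar_rec : ∀ (a b : Z) (w₁ w₂ : H),
      astar (ι a * w₁) (ι b * w₂) =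
        ι a * astar w₁ (ι b * w₂) + ι b * astar (ι a * w₁) w₂ + ι (circ a b) * astar w₁ w₂)
    (hact_one : ∀ a : Z, act a 1 = 0)
    (hact_rec : ∀ (a b : Z) (w : H), act a (ι b * w) = ι (circ a b) * w)
    (a : Z) (i : ℕ) {v : H} (hv : v ∈ letterSpan ι) :
    astar (ι a ^ (i + 1)) (ι a * v + act a v) =
      ι a * astar (ι a ^ i) (ι a * v + act a v) +
        (ι a * astar (ι a ^ (i + 1)) v + act a (astar (ι a ^ (i + 1)) v)) := by
  set E := LinearMap.mulLeft R (ι a) + act a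
  have hpow : astar (ι a ^ (i + 1)) = astar (ι a * ι a ^ i) := by rw [pow_succ']
  have hstar_letter : astar (ι a * ι a ^ i) (ι a) =
      ι a * astar (ι a ^ i) (ι a) + ι a * (ι a * ι a ^ i) + ι (circ a a) * ι a ^ i := by
    simpa [hstar_one_right] using hstar_rec a a (ι a ^ i) 1
  refine LinearMap.eqOn_letterSpan (f := (astar (ι a ^ (i + 1))).comp E)
    (g := (LinearMap.mulLeft R (ι a)).comp ((astar (ι a ^ i)).comp E) +
      E.comp (astar (ι a ^ (i + 1)))) ι ?_ ?_ hv
  · simp [E, hpow, hact_one, hact_rec, hstar_one_right, hstar_letter]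
    abel
  · intro b w
    simp [E, hpow, hact_rec, hstar_rec, mul_add]
    abel

end Harmonic

theorem Sr_pow_star_general
    {Z H : Type*} [AddCommGroup Z] [Module ℚ Z] [Ring H] [Algebra ℚ H]
    (ι : Z →ₗ[ℚ] H)
    (circ : Z →ₗ[ℚ] Z →ₗ[ℚ] Z)
    (astar : H →ₗ[ℚ] H →ₗ[ℚ] H)
    (hstar_one_left : ∀ w : H, astar 1 w = w)
    (hstar_one_right : ∀ w : H, astar w 1 = w)
    (hstar_rec : ∀ (a b : Z) (w₁ w₂ : H),
      astar (ι a * w₁) (ι b * w₂) =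
        ι a * astar w₁ (ι b * w₂) + ι b * astar (ι a * w₁) w₂ + ι (circ a b) * astar w₁ w₂)
    (act : Z →ₗ[ℚ] H →ₗ[ℚ] H)
    (hact_one : ∀ a : Z, act a 1 = 0)
    (hact_rec : ∀ (a b : Z) (w : H), act a (ι b * w) = ι (circ a b) * w)
    (S : ℚ → H →ₗ[ℚ] H)
    (hS_one : ∀ r : ℚ, S r 1 = 1)
    (hS_rec : ∀ (r : ℚ) (a : Z) (w : H), S r (ι a * w) = ι a * S r w + r • act a (S r w))
    (r : ℚ) (a : Z) (n : ℕ) :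
    S r ((ι a) ^ n) =
      ∑ i ∈ Finset.range (n + 1),
        (r ^ (n - i) * (1 - r) ^ i) • astar ((ι a) ^ i) (S 1 ((ι a) ^ (n - i))) := by
  set L := LinearMap.mulLeft ℚ (ι a)
  set E := L + act a
  set A : ℕ → ℕ → H := fun i j => astar (ι a ^ i) (S 1 (ι a ^ j))
  have hS1_succ : ∀ j, S 1 (ι a ^ (j + 1)) = ι a * S 1 (ι a ^ j) + act a (S 1 (ι a ^ j)) := by
    intro j
    rw [pow_succ', hS_rec, one_smul]
  have hS1_mem : ∀ j, S 1 (ι a ^ j) ∈ letterSpan ι := by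
    intro j
    induction j with
    | zero => simpa [hS_one] using one_mem_letterSpan ι
    | succ j ih => rw [hS1_succ]; exact mapsTo_mulLeft_add_act_letterSpan ι circ act hact_one hact_rec a ih
  have hX : ∀ i, A (i + 1) 0 = L (A i 0) := by simp [A, L, hS_one, hstar_one_right, pow_succ']
  have hY : ∀ j, A 0 (j + 1) = E (A 0 j) := by simp [A, E, L, hstar_one_left, hS1_succ]
  have hXY : ∀ i j, A (i + 1) (j + 1) = L (A i (j + 1)) + E (A (i + 1) j) := fun i j => by
    have key := astar_pow_succ_mul_add_act ι circ act astar hstar_one_right hstar_rec hact_one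
      hact_rec a i (hS1_mem j)
    rwa [← hS1_succ] at key
  have hT : L + r • act a = (1 - r) • L + r • E := by
    simp only [E]
    module
  calc S r (ι a ^ n) = (((1 - r) • L + r • E) ^ n) (A 0 0) := by
        rw [S_pow_eq_pow_apply_one ι act S hS_one hS_rec, hT]
        simp [A, hS_one, hstar_one_left]
    _ = ∑ p ∈ antidiagonal n, ((1 - r) ^ p.1 * r ^ p.2) • A p.1 p.2 :=
        Module.End.smul_add_smul_pow_apply_of_pascal L E (1 - r) r A hX hY hXY n
    _ = _ := by
        rw [Nat.sum_antidiagonal_eq_sum_range_succ (fun i j => ((1 - r) ^ i * r ^ j) • A i j)]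
        simp only [A, mul_comm]

theorem Sr_pow_star
    {Z H : Type*} [AddCommGroup Z] [Module ℚ Z] [Ring H] [Algebra ℚ H]
    (ι : Z →ₗ[ℚ] H)
    (circ : Z →ₗ[ℚ] Z →ₗ[ℚ] Z)
    (hcomm : ∀ a b : Z, circ a b = circ b a)
    (hassoc : ∀ a b c : Z, circ (circ a b) c = circ a (circ b c))
    (astar : H →ₗ[ℚ] H →ₗ[ℚ] H)
    (hstar_one_left : ∀ w : H, astar 1 w = w)
    (hstar_one_right : ∀ w : H, astar w 1 = w)
    (hstar_rec : ∀ (a b : Z) (w₁ w₂ : H),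
      astar (ι a * w₁) (ι b * w₂) =
        ι a * astar w₁ (ι b * w₂) + ι b * astar (ι a * w₁) w₂ + ι (circ a b) * astar w₁ w₂)
    (act : Z →ₗ[ℚ] H →ₗ[ℚ] H)
    (hact_one : ∀ a : Z, act a 1 = 0)
    (hact_rec : ∀ (a b : Z) (w : H), act a (ι b * w) = ι (circ a b) * w)
    (S : ℚ → H →ₗ[ℚ] H)
    (hS_one : ∀ r : ℚ, S r 1 = 1)
    (hS_rec : ∀ (r : ℚ) (a : Z) (w : H), S r (ι a * w) = ι a * S r w + r • act a (S r w))
    (r : ℚ) (a : Z) (n : ℕ) (hn : 1 ≤ n) :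
    S r ((ι a) ^ n) =
      ∑ i ∈ Finset.range (n + 1),
        (r ^ (n - i) * (1 - r) ^ i) • astar ((ι a) ^ i) (S 1 ((ι a) ^ (n - i))) :=
  Sr_pow_star_general ι circ astar hstar_one_left hstar_one_right hstar_rec act hact_one hact_rec S
    hS_one hS_rec r a n
end

section
/- In the harmonic algebra setting, for any a ∈ 𝔷 and any positive integer n, the identity sum over i from 0 to n of (-1)^i * (a^i ∗ S(a^(n-i))) = 0 holds, where S = S^1. -/
/-!
Write `x = ι a`, `s(u) = ∑ⱼ S(xʲ) uʲ = S(1/(1 - xu))` and `T(w) = (1/(1 + xu)) ∗ w`; the claim is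
that `T(s) = 1`. Expanding `S` gives `s = 1 + ι(B) s` with `B = ∑ₖ a^{∘(k+1)} u^{k+1}`, and the
recursion of `∗` gives `(1 + xu) T(ι b w) = ι(b - u a∘b) T(w)`. Since `B - u a∘B = u a`, this
yields `(1 + xu) T(s) = 1 + xu T(s)`, i.e. `T(s) = 1`. Everything is done coefficientwise, with
the powers `a^{∘(k+1)}` written as `(circ a ^ k) a`.
-/

open Finset Finset.Nat

namespace Finset.Nat

theorem sum_antidiagonal_antidiagonal_comm {M : Type*} [AddCommMonoid M]
    (f : ℕ → ℕ → ℕ → M) (n : ℕ) :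
    ∑ p ∈ antidiagonal n, ∑ q ∈ antidiagonal p.2, f p.1 q.1 q.2 =
      ∑ p ∈ antidiagonal n, ∑ q ∈ antidiagonal p.2, f q.1 p.1 q.2 := by
  simp only [Finset.sum_sigma']
  apply Finset.sum_nbij' (fun x ↦ ⟨(x.2.1, x.1.1 + x.2.2), (x.1.1, x.2.2)⟩)
    (fun x ↦ ⟨(x.2.1, x.1.1 + x.2.2), (x.1.1, x.2.2)⟩) <;>
    aesop (add simp [add_assoc, add_left_comm])

theorem sum_antidiagonal_sub {G : Type*} [AddCommGroup G] (f : ℕ → ℕ → G) (n : ℕ) :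
    ∑ p ∈ antidiagonal n, (f p.1 (p.2 + 1) - f (p.1 + 1) p.2) = f 0 (n + 1) - f (n + 1) 0 := by
  have h₁ := sum_antidiagonal_succ (f := fun p : ℕ × ℕ ↦ f p.1 p.2) (n := n)
  have h₂ := sum_antidiagonal_succ' (f := fun p : ℕ × ℕ ↦ f p.1 p.2) (n := n)
  rw [sum_sub_distrib]
  simp only at h₁ h₂
  rw [eq_sub_of_add_eq' h₁.symm, eq_sub_of_add_eq' h₂.symm]
  abel

end Finset.Nat

section HarmonicAlgebra

variable {Z H : Type*} [AddCommGroup Z] [Module ℚ Z] [Ring H] [Algebra ℚ H]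

def altPowStar (astar : H →ₗ[ℚ] H →ₗ[ℚ] H) (x : H) (i : ℕ) : H →ₗ[ℚ] H :=
  (-1 : ℚ) ^ i • astar (x ^ i)

/-- The coefficient of `uⁿ` in `(1/(1 + xu)) ∗ ∑ⱼ wⱼ uʲ`. -/
def altStarConv (astar : H →ₗ[ℚ] H →ₗ[ℚ] H) (x : H) (w : ℕ → H) (n : ℕ) : H :=
  ∑ p ∈ antidiagonal n, altPowStar astar x p.1 (w p.2)

variable (ι : Z →ₗ[ℚ] H) (circ : Z →ₗ[ℚ] Z →ₗ[ℚ] Z) (astar : H →ₗ[ℚ] H →ₗ[ℚ] H) (a : Z)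

theorem apply_pow_succ_eq_sum (act : Z →ₗ[ℚ] H →ₗ[ℚ] H) (hact_one : act a 1 = 0)
    (hact_rec : ∀ (b : Z) (w : H), act a (ι b * w) = ι (circ a b) * w)
    (S : H →ₗ[ℚ] H) (hS_one : S 1 = 1)
    (hS_rec : ∀ w : H, S (ι a * w) = ι a * S w + act a (S w)) (m : ℕ) :
    S (ι a ^ (m + 1)) = ∑ p ∈ antidiagonal m, ι ((circ a ^ p.1) a) * S (ι a ^ p.2) := by
  induction m with
  | zero => simpa [hact_one, hS_one] using hS_rec 1
  | succ m ih =>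
    rw [pow_succ' (ι a) (m + 1), hS_rec, sum_antidiagonal_succ, pow_zero, Module.End.one_apply]
    congr 1
    rw [ih, map_sum]
    simp only [hact_rec, pow_succ', Module.End.mul_apply]

theorem altPowStar_zero_apply (hstar_one_left : ∀ w : H, astar 1 w = w) (x w : H) :
    altPowStar astar x 0 w = w := by
  simp [altPowStar, hstar_one_left]

theorem altPowStar_succ_mul
    (hstar_rec : ∀ (a b : Z) (w₁ w₂ : H),
      astar (ι a * w₁) (ι b * w₂) =
        ι a * astar w₁ (ι b * w₂) + ι b * astar (ι a * w₁) w₂ + ι (circ a b) * astar w₁ w₂)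
    (i : ℕ) (b : Z) (w : H) :
    altPowStar astar (ι a) (i + 1) (ι b * w) =
      -(ι a * altPowStar astar (ι a) i (ι b * w)) + ι b * altPowStar astar (ι a) (i + 1) w
        - ι (circ a b) * altPowStar astar (ι a) i w := by
  simp only [altPowStar, LinearMap.smul_apply, pow_succ' (ι a) i, hstar_rec, mul_smul_comm,
    smul_add, pow_succ (-1 : ℚ) i, mul_neg, mul_one, neg_smul]
  abel

theorem altStarConv_zero_mul (hstar_one_left : ∀ w : H, astar 1 w = w) (b : Z) (w : ℕ → H) :
    altStarConv astar (ι a) (fun j ↦ ι b * w j) 0 = ι b * altStarConv astar (ι a) w 0 := by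
  simp [altStarConv, altPowStar_zero_apply astar hstar_one_left]

theorem altStarConv_succ_mul_add (hstar_one_left : ∀ w : H, astar 1 w = w)
    (hstar_rec : ∀ (a b : Z) (w₁ w₂ : H),
      astar (ι a * w₁) (ι b * w₂) =
        ι a * astar w₁ (ι b * w₂) + ι b * astar (ι a * w₁) w₂ + ι (circ a b) * astar w₁ w₂)
    (b : Z) (w : ℕ → H) (m : ℕ) :
    altStarConv astar (ι a) (fun j ↦ ι b * w j) (m + 1)
        + ι a * altStarConv astar (ι a) (fun j ↦ ι b * w j) m =
      ι b * altStarConv astar (ι a) w (m + 1) - ι (circ a b) * altStarConv astar (ι a) w m := by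
  simp only [altStarConv, sum_antidiagonal_succ, altPowStar_zero_apply astar hstar_one_left,
    altPowStar_succ_mul ι circ astar a hstar_rec, sum_add_distrib, sum_sub_distrib, sum_neg_distrib,
    mul_add, mul_sum]
  abel

theorem altStarConv_succ_of_eq_sum (c : ℕ → Z) (w : ℕ → H)
    (hw : ∀ j, w (j + 1) = ∑ p ∈ antidiagonal j, ι (c p.1) * w p.2) (n : ℕ) :
    altStarConv astar (ι a) w (n + 1) =
      altPowStar astar (ι a) (n + 1) (w 0)
        + ∑ p ∈ antidiagonal n, altStarConv astar (ι a) (fun j ↦ ι (c p.1) * w j) p.2 := by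
  simp only [altStarConv, sum_antidiagonal_succ', hw, map_sum]
  rw [sum_antidiagonal_antidiagonal_comm (fun i k l ↦ altPowStar astar (ι a) i (ι (c k) * w l))]

theorem altStarConv_succ_eq_zero (hstar_one_left : ∀ w : H, astar 1 w = w)
    (hstar_one_right : ∀ w : H, astar w 1 = w)
    (hstar_rec : ∀ (a b : Z) (w₁ w₂ : H),
      astar (ι a * w₁) (ι b * w₂) =
        ι a * astar w₁ (ι b * w₂) + ι b * astar (ι a * w₁) w₂ + ι (circ a b) * astar w₁ w₂)
    (w : ℕ → H) (hw₀ : w 0 = 1)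
    (hw : ∀ j, w (j + 1) = ∑ p ∈ antidiagonal j, ι ((circ a ^ p.1) a) * w p.2) (n : ℕ) :
    altStarConv astar (ι a) w (n + 1) = 0 := by
  have hF := altStarConv_succ_of_eq_sum ι astar a (fun k ↦ (circ a ^ k) a) w hw
  set F := altStarConv astar (ι a) w
  set Q := fun k ↦ altStarConv astar (ι a) (fun j ↦ ι ((circ a ^ k) a) * w j)
  have hF₀ : F 0 = 1 := by simp [F, altStarConv, altPowStar_zero_apply astar hstar_one_left, hw₀]
  have hQ₀ : ∀ k, Q k 0 = ι ((circ a ^ k) a) * F 0 :=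
    fun k ↦ altStarConv_zero_mul ι astar a hstar_one_left _ w
  have hQ : ∀ k m, Q k (m + 1) + ι a * Q k m =
      ι ((circ a ^ k) a) * F (m + 1) - ι ((circ a ^ (k + 1)) a) * F m := fun k m ↦ by
    rw [altStarConv_succ_mul_add ι circ astar a hstar_one_left hstar_rec, pow_succ',
      Module.End.mul_apply]
  have hτ : ∀ i, altPowStar astar (ι a) (i + 1) (w 0) = -(ι a * altPowStar astar (ι a) i (w 0)) :=
    fun i ↦ by
      simp only [altPowStar, LinearMap.smul_apply, hw₀, hstar_one_right, pow_succ' (ι a) i,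
        pow_succ' (-1 : ℚ) i, neg_one_mul, neg_smul, mul_smul_comm]
  cases n with
  | zero =>
    rw [hF, hτ, antidiagonal_zero, sum_singleton]
    change -(ι a * altPowStar astar (ι a) 0 (w 0)) + Q 0 0 = 0
    simp [hQ₀, hF₀, altPowStar_zero_apply astar hstar_one_left, hw₀]
  | succ N =>
    -- the coefficient of `u^(N+2)` in `(1 + xu) T(s) = 1 + xu T(s)`
    rw [← add_eq_right (b := ι a * F (N + 1))]
    calc F (N + 2) + ι a * F (N + 1)
        = (altPowStar astar (ι a) (N + 2) (w 0) + ι a * altPowStar astar (ι a) (N + 1) (w 0))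
            + Q (N + 1) 0 + ∑ p ∈ antidiagonal N, (Q p.1 (p.2 + 1) + ι a * Q p.1 p.2) := by
          rw [hF, hF, sum_antidiagonal_succ', mul_add, mul_sum, sum_add_distrib]
          abel
      _ = ι ((circ a ^ (N + 1)) a) * F 0 + ∑ p ∈ antidiagonal N,
            (ι ((circ a ^ p.1) a) * F (p.2 + 1) - ι ((circ a ^ (p.1 + 1)) a) * F p.2) := by
          simp only [hτ (N + 1), neg_add_cancel, zero_add, hQ₀, hQ]
      _ = ι a * F (N + 1) := by
          rw [sum_antidiagonal_sub (fun k m ↦ ι ((circ a ^ k) a) * F m)]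
          simp

end HarmonicAlgebra

theorem alternating_star_sum_eq_zero_general
    {Z H : Type*} [AddCommGroup Z] [Module ℚ Z] [Ring H] [Algebra ℚ H]
    (ι : Z →ₗ[ℚ] H)
    (circ : Z →ₗ[ℚ] Z →ₗ[ℚ] Z)
    (astar : H →ₗ[ℚ] H →ₗ[ℚ] H)
    (hstar_one_left : ∀ w : H, astar 1 w = w)
    (hstar_one_right : ∀ w : H, astar w 1 = w)
    (hstar_rec : ∀ (a b : Z) (w₁ w₂ : H),
      astar (ι a * w₁) (ι b * w₂) =
        ι a * astar w₁ (ι b * w₂) + ι b * astar (ι a * w₁) w₂ + ι (circ a b) * astar w₁ w₂)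
    (act : Z →ₗ[ℚ] H →ₗ[ℚ] H)
    (hact_one : ∀ a : Z, act a 1 = 0)
    (hact_rec : ∀ (a b : Z) (w : H), act a (ι b * w) = ι (circ a b) * w)
    (S : ℚ → H →ₗ[ℚ] H)
    (hS_one : ∀ r : ℚ, S r 1 = 1)
    (hS_rec : ∀ (r : ℚ) (a : Z) (w : H), S r (ι a * w) = ι a * S r w + r • act a (S r w))
    (a : Z) (n : ℕ) (hn : 1 ≤ n) :
    ∑ i ∈ Finset.range (n + 1),
        (-1 : ℚ) ^ i • astar ((ι a) ^ i) (S 1 ((ι a) ^ (n - i))) = 0 := by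
  obtain ⟨N, rfl⟩ : ∃ N, n = N + 1 := ⟨n - 1, by omega⟩
  have hS : ∀ j, S 1 (ι a ^ (j + 1)) =
      ∑ p ∈ antidiagonal j, ι ((circ a ^ p.1) a) * S 1 (ι a ^ p.2) :=
    apply_pow_succ_eq_sum ι circ a act (hact_one a) (hact_rec a) (S 1) (hS_one 1)
      (fun w ↦ by rw [hS_rec, one_smul])
  rw [← sum_antidiagonal_eq_sum_range_succ
    (fun i j ↦ (-1 : ℚ) ^ i • astar (ι a ^ i) (S 1 (ι a ^ j)))]
  exact altStarConv_succ_eq_zero ι circ astar a hstar_one_left hstar_one_right hstar_rec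
    (fun j ↦ S 1 (ι a ^ j)) (by simp [hS_one]) hS N

theorem alternating_star_sum_eq_zero
    {Z H : Type*} [AddCommGroup Z] [Module ℚ Z] [Ring H] [Algebra ℚ H]
    (ι : Z →ₗ[ℚ] H)
    (circ : Z →ₗ[ℚ] Z →ₗ[ℚ] Z)
    (hcomm : ∀ a b : Z, circ a b = circ b a)
    (hassoc : ∀ a b c : Z, circ (circ a b) c = circ a (circ b c))
    (astar : H →ₗ[ℚ] H →ₗ[ℚ] H)
    (hstar_one_left : ∀ w : H, astar 1 w = w)
    (hstar_one_right : ∀ w : H, astar w 1 = w)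
    (hstar_rec : ∀ (a b : Z) (w₁ w₂ : H),
      astar (ι a * w₁) (ι b * w₂) =
        ι a * astar w₁ (ι b * w₂) + ι b * astar (ι a * w₁) w₂ + ι (circ a b) * astar w₁ w₂)
    (act : Z →ₗ[ℚ] H →ₗ[ℚ] H)
    (hact_one : ∀ a : Z, act a 1 = 0)
    (hact_rec : ∀ (a b : Z) (w : H), act a (ι b * w) = ι (circ a b) * w)
    (S : ℚ → H →ₗ[ℚ] H)
    (hS_one : ∀ r : ℚ, S r 1 = 1)
    (hS_rec : ∀ (r : ℚ) (a : Z) (w : H), S r (ι a * w) = ι a * S r w + r • act a (S r w))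
    (a : Z) (n : ℕ) (hn : 1 ≤ n) :
    ∑ i ∈ Finset.range (n + 1),
        (-1 : ℚ) ^ i • astar ((ι a) ^ i) (S 1 ((ι a) ^ (n - i))) = 0 :=
  alternating_star_sum_eq_zero_general ι circ astar hstar_one_left hstar_one_right hstar_rec act
    hact_one hact_rec S hS_one hS_rec a n hn
end

section
/- In the harmonic algebra setting, for any a₁, a₂ ∈ 𝔷 and any positive integer p, S(a₁^p a₂) = sum over i from 0 to p of (-1)^i * (a₂ a₁^i ∗ S(a₁^(p-i))), where S = S^1 and ∗ is the harmonic product. -/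
/-!
Write `x = a₁` and `Lⱼ = a₁ ∘ (a₁ ∘ ⋯ ∘ a₁)` (`j + 1` letters). Peeling letters off with the
recursion of `S` gives `S(x^{k+1} w) = ∑_{j ≤ k} Lⱼ S(x^{k-j} w) + (a₁ ∘)^{k+1} S(w)`. Feeding this
into the recursion of `∗` shows that the alternating sums `Tᵤ(n) = ∑ᵢ (-1)^i (u xⁱ) ∗ S(x^{n-i})`
satisfy a triangular recursion in `n`. For `u = 1` it forces `T₁(n) = 0` for `n > 0`; then for
`u = a₂` it reads `T(n+1) = ∑_{j ≤ n} Lⱼ T(n-j) + a₂ ∘ Lₙ`, which by commutativity and associativity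
of `∘` is the recursion satisfied by `S(xⁿ a₂)`. Both sequences start at `a₂`, so they agree.
-/

open Finset

section

variable {R Z H : Type*} [CommRing R] [Ring H] [Algebra R H]

theorem eq_of_sum_range_mul_recurrence {f g : ℕ → H} (c e : ℕ → H) (h0 : f 0 = g 0)
    (hf : ∀ n, f (n + 1) = ∑ j ∈ range (n + 1), c j * f (n - j) + e n)
    (hg : ∀ n, g (n + 1) = ∑ j ∈ range (n + 1), c j * g (n - j) + e n) : f = g := by
  funext n
  induction n using Nat.strong_induction_on with
  | _ n ih =>
    cases n with
    | zero => exact h0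
    | succ n =>
      rw [hf, hg]
      congr 1
      exact sum_congr rfl fun j _ => by rw [ih (n - j) (by omega)]

theorem sum_range_mul_ite_sub_eq_zero (c : ℕ → H) (n : ℕ) :
    ∑ j ∈ range (n + 1), c j * (if n - j = 0 then 1 else 0) = c n := by
  rw [sum_eq_single_of_mem n (self_mem_range_succ n) fun j hj hjn => ?_]
  · simp
  · rw [if_neg (by simp only [mem_range] at hj; omega), mul_zero]

theorem sum_range_sum_range_sub_comm {M : Type*} [AddCommMonoid M] (f : ℕ → ℕ → ℕ → M) (n : ℕ) :
    ∑ i ∈ range (n + 2), ∑ j ∈ range (n + 1 - i), f i j (n + 1 - i - 1 - j) =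
      ∑ j ∈ range (n + 1), ∑ i ∈ range (n - j + 1), f i j (n - j - i) := by
  rw [sum_comm' (t' := range (n + 1)) (s' := fun j => range (n - j + 1))]
  · refine sum_congr rfl fun j _ => sum_congr rfl fun i _ => ?_
    congr 1
    omega
  · intro i j
    simp only [mem_range]
    omega

/-- `act a` is the operator `a ∘ -` on words. -/
structure IsSOperator (ι : Z → H) (circ : Z → Z → Z) (act : Z → H →ₗ[R] H) (S : H → H) : Prop where
  map_one : S 1 = 1
  map_letter_mul : ∀ a w, S (ι a * w) = ι a * S w + act a (S w)
  act_one : ∀ a, act a 1 = 0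
  act_letter_mul : ∀ a b w, act a (ι b * w) = ι (circ a b) * w

structure IsHarmonicProduct (ι : Z → H) (circ : Z → Z → Z) (star : H →ₗ[R] H →ₗ[R] H) :
    Prop where
  one_star : ∀ w, star 1 w = w
  star_one : ∀ w, star w 1 = w
  letter_mul_star_letter_mul : ∀ a b w₁ w₂, star (ι a * w₁) (ι b * w₂) =
    ι a * star w₁ (ι b * w₂) + ι b * star (ι a * w₁) w₂ + ι (circ a b) * star w₁ w₂

def altStarSum (star : H →ₗ[R] H →ₗ[R] H) (S : H → H) (u x : H) (n : ℕ) : H :=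
  ∑ i ∈ range (n + 1), (-1 : R) ^ i • star (u * x ^ i) (S (x ^ (n - i)))

variable {ι : Z → H} {circ : Z → Z → Z} {star : H →ₗ[R] H →ₗ[R] H} {act : Z → H →ₗ[R] H}
  {S : H → H}

-- `circPow (flip circ) a j` is the right-nested power `a ∘ (a ∘ ⋯ ∘ a)`: the powers arise in this
-- form, so no commutativity is needed until the very end.
theorem IsSOperator.apply_pow_succ_mul (hS : IsSOperator ι circ act S) (a : Z) (w : H) (k : ℕ) :
    S (ι a ^ (k + 1) * w) =
      ∑ j ∈ range (k + 1), ι (circPow (flip circ) a j) * S (ι a ^ (k - j) * w) +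
        (act a)^[k + 1] (S w) := by
  induction k with
  | zero => simp [hS.map_letter_mul, circPow]
  | succ k ih =>
    rw [pow_succ', mul_assoc, hS.map_letter_mul, ih, map_add, map_sum, sum_range_succ' _ (k + 1),
      Function.iterate_succ_apply' _ (k + 1)]
    simp only [hS.act_letter_mul, Nat.add_sub_add_right, Nat.sub_zero]
    rw [← ih]
    simp only [circPow, flip]
    abel

theorem IsSOperator.apply_pow_succ (hS : IsSOperator ι circ act S) (a : Z) (k : ℕ) :
    S (ι a ^ (k + 1)) = ∑ j ∈ range (k + 1), ι (circPow (flip circ) a j) * S (ι a ^ (k - j)) := by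
  simpa [hS.map_one, hS.act_one, iterate_map_zero] using hS.apply_pow_succ_mul a 1 k

theorem IsSOperator.apply_letter (hS : IsSOperator ι circ act S) (b : Z) : S (ι b) = ι b := by
  simpa [hS.map_one, hS.act_one] using hS.map_letter_mul b 1

theorem IsSOperator.act_iterate_letter (hS : IsSOperator ι circ act S) (a b : Z) (k : ℕ) :
    (act a)^[k] (ι b) = ι ((circ a)^[k] b) := by
  induction k with
  | zero => rfl
  | succ k ih =>
    simpa only [Function.iterate_succ_apply', ih, mul_one] using
      hS.act_letter_mul a ((circ a)^[k] b) 1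

theorem IsSOperator.apply_pow_succ_mul_letter (hS : IsSOperator ι circ act S) (a b : Z) (k : ℕ) :
    S (ι a ^ (k + 1) * ι b) =
      ∑ j ∈ range (k + 1), ι (circPow (flip circ) a j) * S (ι a ^ (k - j) * ι b) +
        ι ((circ a)^[k + 1] b) := by
  rw [hS.apply_pow_succ_mul, hS.apply_letter, hS.act_iterate_letter]

theorem star_letter_mul_S_pow (hS : IsSOperator ι circ act S)
    (hstar : IsHarmonicProduct ι circ star) (a b : Z) (u : H) (k : ℕ) :
    star (ι b * u) (S (ι a ^ k)) = ι b * star u (S (ι a ^ k)) +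
      ∑ j ∈ range k, (ι (circPow (flip circ) a j) * star (ι b * u) (S (ι a ^ (k - 1 - j))) +
        ι (circ b (circPow (flip circ) a j)) * star u (S (ι a ^ (k - 1 - j)))) := by
  cases k with
  | zero => simp [hS.map_one, hstar.star_one]
  | succ k =>
    rw [hS.apply_pow_succ, map_sum, map_sum, mul_sum, ← sum_add_distrib]
    refine sum_congr rfl fun j _ => ?_
    rw [hstar.letter_mul_star_letter_mul, Nat.add_sub_cancel, add_assoc]

theorem altStarSum_zero (u x : H) : altStarSum star S u x 0 = star u (S 1) := by
  simp [altStarSum]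

theorem altStarSum_succ (u x : H) (n : ℕ) :
    altStarSum star S u x (n + 1) = star u (S (x ^ (n + 1))) - altStarSum star S (u * x) x n := by
  simp only [altStarSum, sum_range_succ' _ (n + 1), pow_zero, one_smul, mul_one, Nat.sub_zero,
    Nat.add_sub_add_right, pow_succ (-1 : R), mul_neg_one, neg_smul, sum_neg_distrib, pow_succ' x,
    mul_assoc]
  abel

theorem altStarSum_letter_succ_eq (hS : IsSOperator ι circ act S)
    (hstar : IsHarmonicProduct ι circ star) (a b : Z) (n : ℕ) :
    altStarSum star S (ι b) (ι a) (n + 1) = ι b * altStarSum star S 1 (ι a) (n + 1) +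
      ∑ j ∈ range (n + 1), (ι (circPow (flip circ) a j) * altStarSum star S (ι b) (ι a) (n - j) +
        ι (circ b (circPow (flip circ) a j)) * altStarSum star S 1 (ι a) (n - j)) := by
  have expand : ∀ i, (-1 : R) ^ i • star (ι b * ι a ^ i) (S (ι a ^ (n + 1 - i))) =
      ι b * ((-1 : R) ^ i • star (ι a ^ i) (S (ι a ^ (n + 1 - i)))) +
        (∑ j ∈ range (n + 1 - i), ι (circPow (flip circ) a j) *
            ((-1 : R) ^ i • star (ι b * ι a ^ i) (S (ι a ^ (n + 1 - i - 1 - j)))) +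
          ∑ j ∈ range (n + 1 - i), ι (circ b (circPow (flip circ) a j)) *
            ((-1 : R) ^ i • star (ι a ^ i) (S (ι a ^ (n + 1 - i - 1 - j))))) := fun i => by
    rw [star_letter_mul_S_pow hS hstar, ← sum_add_distrib]
    simp only [smul_add, smul_sum, mul_smul_comm]
  simp only [altStarSum, one_mul, mul_sum]
  rw [sum_congr rfl fun i _ => expand i, sum_add_distrib, sum_add_distrib, sum_add_distrib,
    sum_range_sum_range_sub_comm (fun i j m => ι (circPow (flip circ) a j) *
      ((-1 : R) ^ i • star (ι b * ι a ^ i) (S (ι a ^ m)))),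
    sum_range_sum_range_sub_comm (fun i j m => ι (circ b (circPow (flip circ) a j)) *
      ((-1 : R) ^ i • star (ι a ^ i) (S (ι a ^ m))))]

theorem altStarSum_one_eq (hS : IsSOperator ι circ act S) (hstar : IsHarmonicProduct ι circ star)
    (a : Z) (n : ℕ) : altStarSum star S 1 (ι a) n = if n = 0 then 1 else 0 := by
  induction n using Nat.strong_induction_on with
  | _ n ih =>
    have hsucc : ∀ m, altStarSum star S 1 (ι a) (m + 1) =
        S (ι a ^ (m + 1)) - altStarSum star S (ι a) (ι a) m := fun m => by
      rw [altStarSum_succ, hstar.one_star, one_mul]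
    rcases n with _ | _ | n
    · rw [altStarSum_zero, hS.map_one, hstar.one_star, if_pos rfl]
    · rw [hsucc, altStarSum_zero, hS.map_one, hstar.star_one, pow_one, hS.apply_letter, sub_self,
        if_neg (by omega)]
    · have hletter : ∑ j ∈ range (n + 1),
          ι (circPow (flip circ) a j) * altStarSum star S (ι a) (ι a) (n - j) =
            ∑ j ∈ range (n + 1), ι (circPow (flip circ) a j) * S (ι a ^ (n + 1 - j)) := by
        refine sum_congr rfl fun j hj => ?_
        have h := hsucc (n - j)
        rw [ih _ (by simp only [mem_range] at hj; omega), if_neg (by omega), eq_comm, sub_eq_zero,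
          show n - j + 1 = n + 1 - j by simp only [mem_range] at hj; omega] at h
        rw [h]
      have hdelta : ∑ j ∈ range (n + 1),
          ι (circ a (circPow (flip circ) a j)) * altStarSum star S 1 (ι a) (n - j) =
            ι (circPow (flip circ) a (n + 1)) := by
        refine (sum_congr rfl fun j _ => ?_).trans
          (sum_range_mul_ite_sub_eq_zero (fun j => ι (circ a (circPow (flip circ) a j))) n)
        rw [ih (n - j) (by omega)]
      rw [hsucc, altStarSum_letter_succ_eq hS hstar, ih (n + 1) (by omega), if_neg (by omega),
        mul_zero, zero_add, sum_add_distrib, hletter, hdelta, hS.apply_pow_succ a (n + 1),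
        sum_range_succ, Nat.sub_self, pow_zero, hS.map_one, mul_one, sub_self, if_neg (by omega)]

theorem altStarSum_letter_succ (hS : IsSOperator ι circ act S)
    (hstar : IsHarmonicProduct ι circ star) (a b : Z) (n : ℕ) :
    altStarSum star S (ι b) (ι a) (n + 1) =
      ∑ j ∈ range (n + 1), ι (circPow (flip circ) a j) * altStarSum star S (ι b) (ι a) (n - j) +
        ι (circ b (circPow (flip circ) a n)) := by
  have hone := altStarSum_one_eq hS hstar a
  rw [altStarSum_letter_succ_eq hS hstar, hone, if_neg (by omega), mul_zero, zero_add,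
    sum_add_distrib,
    ← sum_range_mul_ite_sub_eq_zero (fun j => ι (circ b (circPow (flip circ) a j)))]
  simp only [hone]

theorem circ_circPow_flip_eq_iterate (hcomm : ∀ a b : Z, circ a b = circ b a)
    (hassoc : ∀ a b c : Z, circ (circ a b) c = circ a (circ b c)) (a b : Z) (n : ℕ) :
    circ b (circPow (flip circ) a n) = (circ a)^[n + 1] b := by
  induction n with
  | zero => exact hcomm b a
  | succ n ih =>
    rw [Function.iterate_succ_apply', ← ih]
    simp only [circPow, flip]
    rw [← hassoc, hcomm b a, hassoc]

end

theorem S_pow_mul_right_general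
    {Z H : Type*} [AddCommGroup Z] [Module ℚ Z] [Ring H] [Algebra ℚ H]
    (ι : Z →ₗ[ℚ] H)
    (circ : Z →ₗ[ℚ] Z →ₗ[ℚ] Z)
    (hcomm : ∀ a b : Z, circ a b = circ b a)
    (hassoc : ∀ a b c : Z, circ (circ a b) c = circ a (circ b c))
    (astar : H →ₗ[ℚ] H →ₗ[ℚ] H)
    (hstar_one_left : ∀ w : H, astar 1 w = w)
    (hstar_one_right : ∀ w : H, astar w 1 = w)
    (hstar_rec : ∀ (a b : Z) (w₁ w₂ : H),
      astar (ι a * w₁) (ι b * w₂) =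
        ι a * astar w₁ (ι b * w₂) + ι b * astar (ι a * w₁) w₂ + ι (circ a b) * astar w₁ w₂)
    (act : Z →ₗ[ℚ] H →ₗ[ℚ] H)
    (hact_one : ∀ a : Z, act a 1 = 0)
    (hact_rec : ∀ (a b : Z) (w : H), act a (ι b * w) = ι (circ a b) * w)
    (S : ℚ → H →ₗ[ℚ] H)
    (hS_one : ∀ r : ℚ, S r 1 = 1)
    (hS_rec : ∀ (r : ℚ) (a : Z) (w : H), S r (ι a * w) = ι a * S r w + r • act a (S r w))
    (a₁ a₂ : Z) (p : ℕ) :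
    S 1 ((ι a₁) ^ p * ι a₂) =
      ∑ i ∈ Finset.range (p + 1),
        (-1 : ℚ) ^ i • astar (ι a₂ * (ι a₁) ^ i) (S 1 ((ι a₁) ^ (p - i))) := by
  have hS : IsSOperator ι (fun a b => circ a b) act (S 1) :=
    ⟨hS_one 1, fun a w => by rw [hS_rec, one_smul], hact_one, hact_rec⟩
  have hstar : IsHarmonicProduct ι (fun a b => circ a b) astar :=
    ⟨hstar_one_left, hstar_one_right, hstar_rec⟩
  suffices altStarSum astar (S 1) (ι a₂) (ι a₁) = fun p => S 1 (ι a₁ ^ p * ι a₂) from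
    (congrFun this p).symm
  refine eq_of_sum_range_mul_recurrence (fun j => ι (circPow (flip fun a b => circ a b) a₁ j))
    (fun n => ι ((circ a₁)^[n + 1] a₂)) ?_ (fun n => ?_) (hS.apply_pow_succ_mul_letter a₁ a₂)
  · rw [altStarSum_zero, hS.map_one, hstar.star_one, pow_zero, one_mul, hS.apply_letter]
  · rw [altStarSum_letter_succ hS hstar, circ_circPow_flip_eq_iterate hcomm hassoc]

theorem S_pow_mul_right
    {Z H : Type*} [AddCommGroup Z] [Module ℚ Z] [Ring H] [Algebra ℚ H]
    (ι : Z →ₗ[ℚ] H)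
    (circ : Z →ₗ[ℚ] Z →ₗ[ℚ] Z)
    (hcomm : ∀ a b : Z, circ a b = circ b a)
    (hassoc : ∀ a b c : Z, circ (circ a b) c = circ a (circ b c))
    (astar : H →ₗ[ℚ] H →ₗ[ℚ] H)
    (hstar_one_left : ∀ w : H, astar 1 w = w)
    (hstar_one_right : ∀ w : H, astar w 1 = w)
    (hstar_rec : ∀ (a b : Z) (w₁ w₂ : H),
      astar (ι a * w₁) (ι b * w₂) =
        ι a * astar w₁ (ι b * w₂) + ι b * astar (ι a * w₁) w₂ + ι (circ a b) * astar w₁ w₂)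
    (act : Z →ₗ[ℚ] H →ₗ[ℚ] H)
    (hact_one : ∀ a : Z, act a 1 = 0)
    (hact_rec : ∀ (a b : Z) (w : H), act a (ι b * w) = ι (circ a b) * w)
    (S : ℚ → H →ₗ[ℚ] H)
    (hS_one : ∀ r : ℚ, S r 1 = 1)
    (hS_rec : ∀ (r : ℚ) (a : Z) (w : H), S r (ι a * w) = ι a * S r w + r • act a (S r w))
    (a₁ a₂ : Z) (p : ℕ) (hp : 1 ≤ p) :
    S 1 ((ι a₁) ^ p * ι a₂) =
      ∑ i ∈ Finset.range (p + 1),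
        (-1 : ℚ) ^ i • astar (ι a₂ * (ι a₁) ^ i) (S 1 ((ι a₁) ^ (p - i))) :=
  S_pow_mul_right_general ι circ hcomm hassoc astar hstar_one_left hstar_one_right hstar_rec act
    hact_one hact_rec S hS_one hS_rec a₁ a₂ p
end

section
/- In the harmonic algebra setting, for any a₁, a₂ ∈ 𝔷 and any positive integer q, S^r(a₁ a₂^q) = sum over pairs (i,j) of nonnegative integers with i+j ≤ q of (-1)^i * r^(q-j) * (1-r)^j * (a₂^i a₁ a₂^j ∗ S(a₂^(q-i-j))), where S = S^1 and r is a polynomial variable. -/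
open Finset

-- The antidiagonal sums `R n = ∑ j, W j (n - j)` satisfy `R (n + 1) = ∑ k, c k * R (n - k)`: the
-- `t`-parts of the recursions reassemble into `t • ∑ c k * R (n - k)`, the `s`-parts into `s • ⋯`.
theorem sum_range_succ_sub_eq_sum_mul {R A : Type*} [Semiring R] [NonUnitalNonAssocSemiring A]
    [Module R A] {s t : R} (hst : s + t = 1) (c : ℕ → A) (W : ℕ → ℕ → A)
    (hW₀ : ∀ m, W 0 (m + 1) = s • ∑ k ∈ range (m + 1), c k * W 0 (m - k))
    (hW : ∀ j m, W (j + 1) m = t • ∑ k ∈ range (m + 1), c k * W j (m - k) +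
      s • ∑ k ∈ range m, c k * W (j + 1) (m - 1 - k)) (n : ℕ) :
    ∑ j ∈ range (n + 2), W j (n + 1 - j) =
      ∑ k ∈ range (n + 1), c k * ∑ j ∈ range (n - k + 1), W j (n - k - j) := by
  have swap₁ : ∑ j ∈ range (n + 1), ∑ k ∈ range (n - j + 1), c k * W j (n - j - k) =
      ∑ k ∈ range (n + 1), c k * ∑ j ∈ range (n - k + 1), W j (n - k - j) := by
    simp_rw [mul_sum]
    rw [sum_comm' (t' := range (n + 1)) (s' := fun k => range (n - k + 1))
      (fun j k => by simp only [mem_range]; omega)]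
    refine sum_congr rfl fun k _ => sum_congr rfl fun j _ => ?_
    rw [Nat.sub_right_comm]
  have swap₂ : ∑ j ∈ range (n + 1), ∑ k ∈ range (n - j), c k * W (j + 1) (n - j - 1 - k) =
      ∑ k ∈ range (n + 1), c k * ∑ j ∈ range (n - k), W (j + 1) (n - k - 1 - j) := by
    simp_rw [mul_sum]
    rw [sum_comm' (t' := range (n + 1)) (s' := fun k => range (n - k))
      (fun j k => by simp only [mem_range]; omega)]
    refine sum_congr rfl fun k _ => sum_congr rfl fun j _ => ?_
    congr 2
    omega
  have peel : ∑ k ∈ range (n + 1), c k * W 0 (n - k) +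
      ∑ k ∈ range (n + 1), c k * ∑ j ∈ range (n - k), W (j + 1) (n - k - 1 - j) =
      ∑ k ∈ range (n + 1), c k * ∑ j ∈ range (n - k + 1), W j (n - k - j) := by
    rw [← sum_add_distrib]
    refine sum_congr rfl fun k _ => ?_
    rw [sum_range_succ', mul_add, add_comm]
    congr 3 with j
    congr 1
    omega
  calc ∑ j ∈ range (n + 2), W j (n + 1 - j)
      = t • ∑ j ∈ range (n + 1), ∑ k ∈ range (n - j + 1), c k * W j (n - j - k) +
          s • (∑ k ∈ range (n + 1), c k * W 0 (n - k) +
            ∑ j ∈ range (n + 1), ∑ k ∈ range (n - j), c k * W (j + 1) (n - j - 1 - k)) := by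
        rw [sum_range_succ', Nat.sub_zero, hW₀]
        simp only [Nat.add_sub_add_right]
        rw [sum_congr rfl fun j _ => hW j (n - j)]
        simp only [sum_add_distrib, smul_sum, smul_add]
        abel
    _ = ∑ k ∈ range (n + 1), c k * ∑ j ∈ range (n - k + 1), W j (n - k - j) := by
        rw [swap₁, swap₂, peel, ← add_smul, add_comm, hst, one_smul]

section HarmonicAlgebra

variable {Z H : Type*} [AddCommGroup Z] [Module ℚ Z] [Ring H] [Algebra ℚ H]

structure IsHarmonicProduct_s12 (ι : Z →ₗ[ℚ] H) (circ : Z →ₗ[ℚ] Z →ₗ[ℚ] Z)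
    (astar : H →ₗ[ℚ] H →ₗ[ℚ] H) : Prop where
  one_left : ∀ w, astar 1 w = w
  one_right : ∀ w, astar w 1 = w
  ι_mul_ι_mul : ∀ a b w₁ w₂, astar (ι a * w₁) (ι b * w₂) =
    ι a * astar w₁ (ι b * w₂) + ι b * astar (ι a * w₁) w₂ + ι (circ a b) * astar w₁ w₂

/-- `act a w` is the paper's `a ∘ w`: it replaces the first letter `b` of the word `w` by
`a ∘ b`. -/
structure IsSrFamily (ι : Z →ₗ[ℚ] H) (circ : Z →ₗ[ℚ] Z →ₗ[ℚ] Z) (act : Z →ₗ[ℚ] H →ₗ[ℚ] H)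
    (S : ℚ → H →ₗ[ℚ] H) : Prop where
  act_one : ∀ a, act a 1 = 0
  act_ι_mul : ∀ a b w, act a (ι b * w) = ι (circ a b) * w
  one : ∀ r, S r 1 = 1
  ι_mul : ∀ r a w, S r (ι a * w) = ι a * S r w + r • act a (S r w)

variable {ι : Z →ₗ[ℚ] H} {circ : Z →ₗ[ℚ] Z →ₗ[ℚ] Z}

namespace IsSrFamily

variable {act : Z →ₗ[ℚ] H →ₗ[ℚ] H} {S : ℚ → H →ₗ[ℚ] H}

theorem S_pow_succ (hS : IsSrFamily ι circ act S) (r : ℚ) (a : Z) (n : ℕ) :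
    S r (ι a ^ (n + 1)) =
      ∑ k ∈ range (n + 1), r ^ k • (ι ((circ a)^[k] a) * S r (ι a ^ (n - k))) := by
  induction n with
  | zero => simpa [hS.one, hS.act_one] using hS.ι_mul r a 1
  | succ n ih =>
    have hact : r • act a (S r (ι a ^ (n + 1))) = ∑ k ∈ range (n + 1),
        r ^ (k + 1) • (ι ((circ a)^[k + 1] a) * S r (ι a ^ (n - k))) := by
      simp only [ih, map_sum, map_smul, hS.act_ι_mul, smul_sum, smul_smul, ← pow_succ',
        Function.iterate_succ_apply']
    rw [pow_succ', hS.ι_mul, hact, sum_range_succ' _ (n + 1)]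
    simp [Function.iterate_succ_apply', add_comm]

theorem act_S_pow (hS : IsSrFamily ι circ act S) (r : ℚ) (a b : Z) (m : ℕ) :
    act a (S r (ι b ^ m)) =
      ∑ k ∈ range m, r ^ k • (ι (circ a ((circ b)^[k] b)) * S r (ι b ^ (m - 1 - k))) := by
  cases m with
  | zero => simp [hS.one, hS.act_one]
  | succ n => simp [hS.S_pow_succ, hS.act_ι_mul]

theorem S_ι_mul_pow (hS : IsSrFamily ι circ act S) (r : ℚ) (a b : Z) (q : ℕ) :
    S r (ι a * ι b ^ q) = ι a * S r (ι b ^ q) +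
      ∑ k ∈ range q, r ^ (k + 1) • (ι (circ a ((circ b)^[k] b)) * S r (ι b ^ (q - 1 - k))) := by
  simp only [hS.ι_mul, hS.act_S_pow, smul_sum, smul_smul, ← pow_succ']

end IsSrFamily

namespace IsHarmonicProduct_s12

variable {astar : H →ₗ[ℚ] H →ₗ[ℚ] H} {act : Z →ₗ[ℚ] H →ₗ[ℚ] H} {S : ℚ → H →ₗ[ℚ] H}
  (hstar : IsHarmonicProduct_s12 ι circ astar) (hS : IsSrFamily ι circ act S)
include hstar hS

theorem star_ι_mul_S_pow (a b : Z) (w : H) (m : ℕ) :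
    astar (ι a * w) (S 1 (ι b ^ m)) = ι a * astar w (S 1 (ι b ^ m)) +
      ∑ k ∈ range m, (ι ((circ b)^[k] b) * astar (ι a * w) (S 1 (ι b ^ (m - 1 - k))) +
        ι (circ a ((circ b)^[k] b)) * astar w (S 1 (ι b ^ (m - 1 - k)))) := by
  cases m with
  | zero => simp [hS.one, hstar.one_right]
  | succ n =>
    simp only [hS.S_pow_succ, one_pow, one_smul, map_sum, hstar.ι_mul_ι_mul, mul_sum,
      sum_add_distrib, add_tsub_cancel_right]
    abel

theorem star_ι_mul_S_pow_self (a : Z) (w : H) (m : ℕ) :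
    astar (ι a * w) (S 1 (ι a ^ m)) =
      ∑ k ∈ range (m + 1), ι ((circ a)^[k] a) * astar w (S 1 (ι a ^ (m - k))) +
      ∑ k ∈ range m, ι ((circ a)^[k] a) * astar (ι a * w) (S 1 (ι a ^ (m - 1 - k))) := by
  rw [hstar.star_ι_mul_S_pow hS, sum_add_distrib, sum_range_succ']
  simp only [Function.iterate_succ_apply', Function.iterate_zero_apply, Nat.sub_zero, Nat.sub_sub,
    add_comm 1]
  abel

theorem alternating_sum_star_pow_mul (a : Z) (v : H) (m : ℕ) :
    ∑ i ∈ range (m + 1), (-1 : ℚ) ^ i • astar (ι a ^ i * v) (S 1 (ι a ^ (m - i))) =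
      astar v (S 1 (ι a ^ m)) -
        ∑ k ∈ range m, ι ((circ a)^[k] a) * astar v (S 1 (ι a ^ (m - 1 - k))) := by
  induction m generalizing v with
  | zero => simp
  | succ m ih =>
    have shift : ∑ i ∈ range (m + 1), (-1 : ℚ) ^ (i + 1) •
          astar (ι a ^ (i + 1) * v) (S 1 (ι a ^ (m + 1 - (i + 1)))) =
        -∑ i ∈ range (m + 1), (-1 : ℚ) ^ i • astar (ι a ^ i * (ι a * v)) (S 1 (ι a ^ (m - i))) := by
      simp [pow_succ, mul_assoc, ← sum_neg_distrib]
    rw [sum_range_succ', shift, ih, hstar.star_ι_mul_S_pow_self hS]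
    simp only [add_sub_cancel_right, pow_zero, one_mul, tsub_zero, one_smul, add_tsub_cancel_right]
    abel

theorem alternating_sum_star_pow_mul_ι_mul (a b : Z) (w : H) (m : ℕ) :
    ∑ i ∈ range (m + 1), (-1 : ℚ) ^ i • astar (ι b ^ i * ι a * w) (S 1 (ι b ^ (m - i))) =
      ι a * astar w (S 1 (ι b ^ m)) +
        ∑ k ∈ range m, ι (circ a ((circ b)^[k] b)) * astar w (S 1 (ι b ^ (m - 1 - k))) := by
  simp only [mul_assoc]
  rw [hstar.alternating_sum_star_pow_mul hS, hstar.star_ι_mul_S_pow hS, sum_add_distrib]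
  abel

theorem S_pow_eq_sum (r : ℚ) (a : Z) (n : ℕ) :
    S r (ι a ^ n) = ∑ j ∈ range (n + 1),
      (r ^ (n - j) * (1 - r) ^ j) • astar (ι a ^ j) (S 1 (ι a ^ (n - j))) := by
  set W : ℕ → ℕ → H := fun j m => (r ^ m * (1 - r) ^ j) • astar (ι a ^ j) (S 1 (ι a ^ m))
  have hW₀ : ∀ m, W 0 (m + 1) =
      r • ∑ k ∈ range (m + 1), (r ^ k • ι ((circ a)^[k] a)) * W 0 (m - k) := by
    intro m
    simp only [W, pow_zero, mul_one, hstar.one_left, hS.S_pow_succ, one_pow, one_smul, smul_sum,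
      smul_mul_smul_comm, smul_smul]
    refine sum_congr rfl fun k hk => ?_
    obtain ⟨d, rfl⟩ := Nat.exists_eq_add_of_le (Nat.lt_succ_iff.mp (mem_range.mp hk))
    simp only [Nat.add_sub_cancel_left]
    ring_nf
  have hW : ∀ j m, W (j + 1) m =
      (1 - r) • ∑ k ∈ range (m + 1), (r ^ k • ι ((circ a)^[k] a)) * W j (m - k) +
        r • ∑ k ∈ range m, (r ^ k • ι ((circ a)^[k] a)) * W (j + 1) (m - 1 - k) := by
    intro j m
    simp only [W]
    rw [pow_succ' (ι a) j, hstar.star_ι_mul_S_pow_self hS, ← pow_succ']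
    simp only [smul_add, smul_sum, smul_mul_smul_comm, smul_smul]
    congr 1
    · refine sum_congr rfl fun k hk => ?_
      obtain ⟨d, rfl⟩ := Nat.exists_eq_add_of_le (Nat.lt_succ_iff.mp (mem_range.mp hk))
      simp only [Nat.add_sub_cancel_left]
      ring_nf
    · refine sum_congr rfl fun k hk => ?_
      obtain ⟨d, rfl⟩ := Nat.exists_eq_add_of_lt (mem_range.mp hk)
      rw [show k + d + 1 - 1 - k = d by omega]
      ring_nf
  induction n using Nat.strong_induction_on with
  | _ n ih =>
    cases n with
    | zero => simp [hS.one, hstar.one_left]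
    | succ n =>
      rw [hS.S_pow_succ, sum_range_succ_sub_eq_sum_mul (add_sub_cancel r 1) _ W hW₀ hW n]
      refine sum_congr rfl fun k _ => ?_
      rw [ih (n - k) (by omega), smul_mul_assoc]

theorem sum_smul_mul_S_pow (r : ℚ) (a : Z) (u : ℕ → H) (q : ℕ) :
    ∑ k ∈ range q, r ^ (k + 1) • (u k * S r (ι a ^ (q - 1 - k))) =
      ∑ j ∈ range (q + 1), ∑ k ∈ range (q - j),
        (r ^ (q - j) * (1 - r) ^ j) • (u k * astar (ι a ^ j) (S 1 (ι a ^ (q - j - 1 - k)))) := by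
  rw [sum_comm' (t' := range q) (s' := fun k => range (q - k))
    (fun j k => by simp only [mem_range]; omega)]
  refine sum_congr rfl fun k hk => ?_
  have hkq := mem_range.mp hk
  rw [hstar.S_pow_eq_sum hS, mul_sum, smul_sum, show q - 1 - k + 1 = q - k by omega]
  refine sum_congr rfl fun j hj => ?_
  have hjq := mem_range.mp hj
  rw [mul_smul_comm, smul_smul, show q - j - 1 - k = q - 1 - k - j by omega,
    show q - j = k + 1 + (q - 1 - k - j) by omega, pow_add]
  ring_nf

end IsHarmonicProduct_s12

end HarmonicAlgebra

theorem Sr_mul_pow_right_general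
    {Z H : Type*} [AddCommGroup Z] [Module ℚ Z] [Ring H] [Algebra ℚ H]
    (ι : Z →ₗ[ℚ] H)
    (circ : Z →ₗ[ℚ] Z →ₗ[ℚ] Z)
    (astar : H →ₗ[ℚ] H →ₗ[ℚ] H)
    (hstar_one_left : ∀ w : H, astar 1 w = w)
    (hstar_one_right : ∀ w : H, astar w 1 = w)
    (hstar_rec : ∀ (a b : Z) (w₁ w₂ : H),
      astar (ι a * w₁) (ι b * w₂) =
        ι a * astar w₁ (ι b * w₂) + ι b * astar (ι a * w₁) w₂ + ι (circ a b) * astar w₁ w₂)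
    (act : Z →ₗ[ℚ] H →ₗ[ℚ] H)
    (hact_one : ∀ a : Z, act a 1 = 0)
    (hact_rec : ∀ (a b : Z) (w : H), act a (ι b * w) = ι (circ a b) * w)
    (S : ℚ → H →ₗ[ℚ] H)
    (hS_one : ∀ r : ℚ, S r 1 = 1)
    (hS_rec : ∀ (r : ℚ) (a : Z) (w : H), S r (ι a * w) = ι a * S r w + r • act a (S r w))
    (r : ℚ) (a₁ a₂ : Z) (q : ℕ) :
    S r (ι a₁ * (ι a₂) ^ q) =
      ∑ i ∈ Finset.range (q + 1), ∑ j ∈ Finset.range (q + 1 - i),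
        ((-1 : ℚ) ^ i * r ^ (q - j) * (1 - r) ^ j) •
          astar ((ι a₂) ^ i * ι a₁ * (ι a₂) ^ j) (S 1 ((ι a₂) ^ (q - i - j))) := by
  have hstar : IsHarmonicProduct_s12 ι circ astar := ⟨hstar_one_left, hstar_one_right, hstar_rec⟩
  have hS : IsSrFamily ι circ act S := ⟨hact_one, hact_rec, hS_one, hS_rec⟩
  have inner : ∀ j ∈ range (q + 1), ∑ i ∈ range (q + 1 - j),
      ((-1 : ℚ) ^ i * r ^ (q - j) * (1 - r) ^ j) •
        astar (ι a₂ ^ i * ι a₁ * ι a₂ ^ j) (S 1 (ι a₂ ^ (q - i - j))) =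
      (r ^ (q - j) * (1 - r) ^ j) • (ι a₁ * astar (ι a₂ ^ j) (S 1 (ι a₂ ^ (q - j))) +
        ∑ k ∈ range (q - j), ι (circ a₁ ((circ a₂)^[k] a₂)) *
          astar (ι a₂ ^ j) (S 1 (ι a₂ ^ (q - j - 1 - k)))) := by
    intro j hj
    rw [← hstar.alternating_sum_star_pow_mul_ι_mul hS, smul_sum,
      show q + 1 - j = q - j + 1 by have := mem_range.mp hj; omega]
    refine sum_congr rfl fun i _ => ?_
    rw [smul_smul, Nat.sub_right_comm]
    ring_nf
  rw [sum_comm' (t' := range (q + 1)) (s' := fun j => range (q + 1 - j))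
      (fun i j => by simp only [mem_range]; omega), sum_congr rfl inner, hS.S_ι_mul_pow,
    hstar.S_pow_eq_sum hS, hstar.sum_smul_mul_S_pow hS]
  simp only [smul_add, sum_add_distrib, mul_sum, smul_sum, mul_smul_comm]

theorem Sr_mul_pow_right
    {Z H : Type*} [AddCommGroup Z] [Module ℚ Z] [Ring H] [Algebra ℚ H]
    (ι : Z →ₗ[ℚ] H)
    (circ : Z →ₗ[ℚ] Z →ₗ[ℚ] Z)
    (hcomm : ∀ a b : Z, circ a b = circ b a)
    (hassoc : ∀ a b c : Z, circ (circ a b) c = circ a (circ b c))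
    (astar : H →ₗ[ℚ] H →ₗ[ℚ] H)
    (hstar_one_left : ∀ w : H, astar 1 w = w)
    (hstar_one_right : ∀ w : H, astar w 1 = w)
    (hstar_rec : ∀ (a b : Z) (w₁ w₂ : H),
      astar (ι a * w₁) (ι b * w₂) =
        ι a * astar w₁ (ι b * w₂) + ι b * astar (ι a * w₁) w₂ + ι (circ a b) * astar w₁ w₂)
    (act : Z →ₗ[ℚ] H →ₗ[ℚ] H)
    (hact_one : ∀ a : Z, act a 1 = 0)
    (hact_rec : ∀ (a b : Z) (w : H), act a (ι b * w) = ι (circ a b) * w)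
    (S : ℚ → H →ₗ[ℚ] H)
    (hS_one : ∀ r : ℚ, S r 1 = 1)
    (hS_rec : ∀ (r : ℚ) (a : Z) (w : H), S r (ι a * w) = ι a * S r w + r • act a (S r w))
    (r : ℚ) (a₁ a₂ : Z) (q : ℕ) (hq : 1 ≤ q) :
    S r (ι a₁ * (ι a₂) ^ q) =
      ∑ i ∈ Finset.range (q + 1), ∑ j ∈ Finset.range (q + 1 - i),
        ((-1 : ℚ) ^ i * r ^ (q - j) * (1 - r) ^ j) •
          astar ((ι a₂) ^ i * ι a₁ * (ι a₂) ^ j) (S 1 ((ι a₂) ^ (q - i - j))) :=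
  Sr_mul_pow_right_general ι circ astar hstar_one_left hstar_one_right hstar_rec act hact_one
    hact_rec S hS_one hS_rec r a₁ a₂ q
end

section
/- For any integer k ≥ 2 and any positive integer n, the alternating convolution sum over i from 0 to n of (-1)^i * ζ({k}^i) * ζ^⋆({k}^(n-i)) equals 0, where ζ({k}^i) = ζ(k,…,k) (i repetitions) is a multiple zeta value and ζ^⋆({k}^(n-i)) is a multiple zeta-star value; for n = 0 the sum equals 1. -/
/-- Multiple zeta value `ζ(k₁,…,kₙ)` of an index given as a list:
sum over strictly decreasing tuples of positive integers. -/
noncomputable def mzv (ks : List ℕ) : ℝ :=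
  ∑' m : {m : Fin ks.length → ℕ //
      (∀ i j : Fin ks.length, i < j → m j < m i) ∧ ∀ i, 0 < m i},
    ∏ i, ((m.1 i : ℝ) ^ ks.get i)⁻¹

/-- Multiple zeta-star value `ζ⋆(k₁,…,kₙ)`: weakly decreasing summation. -/
noncomputable def mzvStar (ks : List ℕ) : ℝ :=
  ∑' m : {m : Fin ks.length → ℕ //
      (∀ i j : Fin ks.length, i < j → m j ≤ m i) ∧ ∀ i, 0 < m i},
    ∏ i, ((m.1 i : ℝ) ^ ks.get i)⁻¹

/-- Multiple t-value `t(k₁,…,kₙ)`: summation over odd positive integers,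
strictly decreasing. -/
noncomputable def mtv (ks : List ℕ) : ℝ :=
  ∑' m : {m : Fin ks.length → ℕ //
      (∀ i j : Fin ks.length, i < j → m j < m i) ∧ (∀ i, 0 < m i) ∧ ∀ i, Odd (m i)},
    ∏ i, ((m.1 i : ℝ) ^ ks.get i)⁻¹

/-- Multiple t-star value `t⋆(k₁,…,kₙ)`: odd summation variables, weakly decreasing. -/
noncomputable def mtvStar (ks : List ℕ) : ℝ :=
  ∑' m : {m : Fin ks.length → ℕ //
      (∀ i j : Fin ks.length, i < j → m j ≤ m i) ∧ (∀ i, 0 < m i) ∧ ∀ i, Odd (m i)},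
    ∏ i, ((m.1 i : ℝ) ^ ks.get i)⁻¹

/-- All indices obtained from `ks` by replacing each comma by a comma or a plus
(i.e. merging consecutive entries). -/
def contractions : List ℕ → List (List ℕ)
  | [] => [[]]
  | [k] => [[k]]
  | k :: k' :: t =>
      (contractions (k' :: t)).map (fun p => k :: p) ++ contractions ((k + k') :: t)
termination_by l => l.length
decreasing_by all_goals simp

/-- Interpolated multiple zeta value `ζ^r(k₁,…,kₙ)`. -/
noncomputable def interpZeta (r : ℝ) (ks : List ℕ) : ℝ :=
  ((contractions ks).map (fun p => r ^ (ks.length - p.length) * mzv p)).sum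

/-- Interpolated multiple t-value `t^r(k₁,…,kₙ)`. -/
noncomputable def interpT (r : ℝ) (ks : List ℕ) : ℝ :=
  ((contractions ks).map (fun p => r ^ (ks.length - p.length) * mtv p)).sum

/-!
Write every term of the convolution as a sum over pairs `(a, b)` of lists of positive integers,
`a` strictly and `b` weakly decreasing with `|a| + |b| = n`, of `(-1)^|a|` times the product of
`m^(-k)` over all entries `m` of `a` and `b`. Moving the largest entry of `a ++ b` to the other list
(out of `a` if it occurs in both) is an involution on these pairs that reverses the sign, so for
`n > 0` the total vanishes. The weights are nonnegative and summable, which justifies the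
rearrangement into a single sum.
-/

namespace AlternatingConvolution

/-- For `R = (· > ·)` these index `ζ({k}^i)`, for `R = (· ≥ ·)` they index `ζ⋆({k}^i)`. -/
abbrev PosChain (R : ℕ → ℕ → Prop) (i : ℕ) : Type :=
  {l : List ℕ // l.length = i ∧ l.Pairwise R ∧ ∀ x ∈ l, 0 < x}

def tupleEquivPosChain (R : ℕ → ℕ → Prop) (i : ℕ) :
    {m : Fin i → ℕ // (∀ a b : Fin i, a < b → R (m a) (m b)) ∧ ∀ a, 0 < m a} ≃
      PosChain R i where
  toFun m := ⟨List.ofFn m.1, List.length_ofFn, List.pairwise_ofFn.2 m.2.1, by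
    simpa [List.mem_ofFn] using m.2.2⟩
  invFun l := ⟨fun j => l.1.get (Fin.cast l.2.1.symm j), by
    obtain ⟨l, rfl, hR, hpos⟩ := l
    exact ⟨fun a b hab => List.pairwise_iff_get.mp hR _ _ hab,
      fun a => hpos _ (List.get_mem l _)⟩⟩
  left_inv m := by
    ext j
    simp
  right_inv l := by
    obtain ⟨l, rfl, hR, hpos⟩ := l
    simp only [Fin.cast_eq_self]
    exact Subtype.ext (List.ofFn_get l)

lemma prod_map_tupleEquivPosChain (R : ℕ → ℕ → Prop) (f : ℕ → ℝ) {i : ℕ}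
    (m : {m : Fin i → ℕ // (∀ a b : Fin i, a < b → R (m a) (m b)) ∧ ∀ a, 0 < m a}) :
    ((tupleEquivPosChain R i m).1.map f).prod = ∏ j, f (m.1 j) := by
  change ((List.ofFn m.1).map f).prod = _
  rw [List.map_ofFn, List.prod_ofFn]
  rfl

lemma tsum_prod_tuple_eq_tsum_posChain (R : ℕ → ℕ → Prop) (f : ℕ → ℝ) (i : ℕ) :
    ∑' m : {m : Fin i → ℕ // (∀ a b : Fin i, a < b → R (m a) (m b)) ∧ ∀ a, 0 < m a},
        ∏ j, f (m.1 j) =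
      ∑' l : PosChain R i, (l.1.map f).prod := by
  simp only [← (tupleEquivPosChain R i).tsum_eq, prod_map_tupleEquivPosChain]

section Summability

variable {f : ℕ → ℝ}

lemma prod_map_nonneg (hf₀ : ∀ n, 0 ≤ f n) (l : List ℕ) : 0 ≤ (l.map f).prod :=
  List.prod_nonneg fun _ hx => by
    obtain ⟨x, -, rfl⟩ := List.mem_map.mp hx
    exact hf₀ x

lemma summable_prod_tuple (hf₀ : ∀ n, 0 ≤ f n) (hf : Summable f) (i : ℕ) :
    Summable fun m : Fin i → ℕ => ∏ j, f (m j) := by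
  induction i with
  | zero => exact .of_finite
  | succ i ih =>
    have hpair : Summable fun p : ℕ × (Fin i → ℕ) => f p.1 * ∏ j, f (p.2 j) :=
      hf.mul_of_nonneg (g := fun m : Fin i → ℕ => ∏ j, f (m j)) ih (Pi.le_def.mpr hf₀)
        (Pi.le_def.mpr fun m => Finset.prod_nonneg fun j _ => hf₀ (m j))
    rw [← (Fin.consEquiv fun _ => ℕ).summable_iff]
    refine hpair.congr fun p => ?_
    simp [Fin.consEquiv, Fin.prod_univ_succ]

lemma summable_prod_map_posChain (hf₀ : ∀ n, 0 ≤ f n) (hf : Summable f)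
    (R : ℕ → ℕ → Prop) (i : ℕ) : Summable fun l : PosChain R i => (l.1.map f).prod := by
  rw [← (tupleEquivPosChain R i).summable_iff]
  simpa only [Function.comp_def, prod_map_tupleEquivPosChain] using
    (summable_prod_tuple hf₀ hf i).comp_injective Subtype.val_injective

lemma summable_prod_map_mul_prod_map (hf₀ : ∀ n, 0 ≤ f n) (hf : Summable f)
    (R S : ℕ → ℕ → Prop) (i j : ℕ) :
    Summable fun p : PosChain R i × PosChain S j => (p.1.1.map f).prod * (p.2.1.map f).prod :=
  (summable_prod_map_posChain hf₀ hf R i).mul_of_nonneg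
    (g := fun l : PosChain S j => (l.1.map f).prod) (summable_prod_map_posChain hf₀ hf S j)
    (Pi.le_def.mpr fun l => prod_map_nonneg hf₀ l.1)
    (Pi.le_def.mpr fun l => prod_map_nonneg hf₀ l.1)

end Summability

lemma mzv_eq_tsum_posChain {ks : List ℕ} {k : ℕ} (hks : ∀ x ∈ ks, x = k) :
    mzv ks =
      ∑' l : PosChain (· > ·) ks.length, (l.1.map fun x : ℕ => ((x : ℝ) ^ k)⁻¹).prod := by
  rw [mzv, ← tsum_prod_tuple_eq_tsum_posChain]
  exact tsum_congr fun m =>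
    Finset.prod_congr rfl fun j _ => by rw [hks _ (List.get_mem ks j)]

lemma mzvStar_eq_tsum_posChain {ks : List ℕ} {k : ℕ} (hks : ∀ x ∈ ks, x = k) :
    mzvStar ks =
      ∑' l : PosChain (· ≥ ·) ks.length, (l.1.map fun x : ℕ => ((x : ℝ) ^ k)⁻¹).prod := by
  rw [mzvStar, ← tsum_prod_tuple_eq_tsum_posChain]
  exact tsum_congr fun m =>
    Finset.prod_congr rfl fun j _ => by rw [hks _ (List.get_mem ks j)]

lemma mzv_replicate (i k : ℕ) :
    mzv (List.replicate i k) =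
      ∑' l : PosChain (· > ·) i, (l.1.map fun x : ℕ => ((x : ℝ) ^ k)⁻¹).prod := by
  rw [mzv_eq_tsum_posChain fun _ => List.eq_of_mem_replicate, List.length_replicate]

lemma mzvStar_replicate (i k : ℕ) :
    mzvStar (List.replicate i k) =
      ∑' l : PosChain (· ≥ ·) i, (l.1.map fun x : ℕ => ((x : ℝ) ^ k)⁻¹).prod := by
  rw [mzvStar_eq_tsum_posChain fun _ => List.eq_of_mem_replicate, List.length_replicate]

def IsChainPair (n : ℕ) (p : List ℕ × List ℕ) : Prop :=
  p.1.length + p.2.length = n ∧ p.1.Pairwise (· > ·) ∧ p.2.Pairwise (· ≥ ·) ∧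
    (∀ x ∈ p.1, 0 < x) ∧ ∀ x ∈ p.2, 0 < x

abbrev ChainPair (n : ℕ) : Type := {p : List ℕ × List ℕ // IsChainPair n p}

def sigmaEquivChainPair (n : ℕ) :
    (Σ i : Fin (n + 1), PosChain (· > ·) i × PosChain (· ≥ ·) (n - i)) ≃ ChainPair n where
  toFun x := ⟨(x.2.1.1, x.2.2.1), by
    obtain ⟨⟨i, hi⟩, ⟨a, ha, hRa, hposa⟩, ⟨b, hb, hRb, hposb⟩⟩ := x
    exact ⟨by simp only [ha, hb]; omega, hRa, hRb, hposa, hposb⟩⟩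
  invFun p := ⟨⟨p.1.1.length, by have := p.2.1; omega⟩,
    ⟨p.1.1, rfl, p.2.2.1, p.2.2.2.2.1⟩,
    ⟨p.1.2, by have := p.2.1; dsimp only; omega, p.2.2.2.1, p.2.2.2.2.2⟩⟩
  left_inv x := by
    obtain ⟨⟨i, hi⟩, ⟨a, ha⟩, b⟩ := x
    obtain rfl : a.length = i := ha.1
    rfl
  right_inv p := rfl

def signedWeight (f : ℕ → ℝ) (p : List ℕ × List ℕ) : ℝ :=
  (-1) ^ p.1.length * ((p.1.map f).prod * (p.2.map f).prod)

lemma sum_range_eq_tsum_signedWeight {f : ℕ → ℝ} (hf₀ : ∀ n, 0 ≤ f n) (hf : Summable f)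
    (n : ℕ) :
    ∑ i ∈ Finset.range (n + 1), (-1) ^ i * (∑' a : PosChain (· > ·) i, (a.1.map f).prod) *
        ∑' b : PosChain (· ≥ ·) (n - i), (b.1.map f).prod =
      ∑' p : ChainPair n, signedWeight f p.1 := by
  set e := sigmaEquivChainPair n
  have he : ∀ x, signedWeight f (e x).1 =
      (-1) ^ (x.1 : ℕ) * ((x.2.1.1.map f).prod * (x.2.2.1.map f).prod) := by
    rintro ⟨i, ⟨a, ha, -⟩, b⟩
    simp only [e, sigmaEquivChainPair, signedWeight, Equiv.coe_fn_mk, ha]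
  have hsum : Summable fun x => signedWeight f (e x).1 := by
    rw [← summable_abs_iff]
    simp only [he, abs_mul, abs_pow, abs_neg, abs_one, one_pow, one_mul,
      abs_of_nonneg (prod_map_nonneg hf₀ _)]
    exact (summable_sigma_of_nonneg fun x =>
      mul_nonneg (prod_map_nonneg hf₀ _) (prod_map_nonneg hf₀ _)).2
      ⟨fun i => summable_prod_map_mul_prod_map hf₀ hf _ _ _ _, .of_finite⟩
  rw [← e.tsum_eq, hsum.tsum_sigma, tsum_fintype, ← Fin.sum_univ_eq_sum_range]
  refine Finset.sum_congr rfl fun i _ => ?_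
  rw [mul_assoc, (summable_prod_map_posChain hf₀ hf _ _).tsum_mul_tsum
    (summable_prod_map_posChain hf₀ hf _ _) (summable_prod_map_mul_prod_map hf₀ hf _ _ _ _),
    ← tsum_mul_left]
  exact tsum_congr fun p => (he ⟨i, p⟩).symm

def transferMax : List ℕ × List ℕ → List ℕ × List ℕ
  | ([], []) => ([], [])
  | (x :: a, []) => (a, [x])
  | ([], y :: b) => ([y], b)
  | (x :: a, y :: b) => if y ≤ x then (a, x :: y :: b) else (y :: x :: a, b)

lemma isChainPair_transferMax {n : ℕ} {p : List ℕ × List ℕ} (h : IsChainPair n p) :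
    IsChainPair n (transferMax p) := by
  obtain ⟨_ | ⟨x, a⟩, _ | ⟨y, b⟩⟩ := p <;> simp only [transferMax] <;> try split_ifs
  all_goals
    simp only [IsChainPair, List.length_cons, List.pairwise_cons, List.mem_cons,
      forall_eq_or_imp, List.Pairwise.nil] at h ⊢
    grind

lemma transferMax_transferMax {a b : List ℕ} (ha : a.Pairwise (· > ·))
    (hb : b.Pairwise (· ≥ ·)) : transferMax (transferMax (a, b)) = (a, b) := by
  rcases a with _ | ⟨x, _ | ⟨x', a⟩⟩ <;> rcases b with _ | ⟨y, _ | ⟨y', b⟩⟩ <;>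
    simp_all [transferMax, List.pairwise_cons] <;> split_ifs <;> simp_all

lemma signedWeight_transferMax (f : ℕ → ℝ) {p : List ℕ × List ℕ} (hp : p ≠ ([], [])) :
    signedWeight f (transferMax p) = -signedWeight f p := by
  obtain ⟨_ | ⟨x, a⟩, _ | ⟨y, b⟩⟩ := p <;> simp only [transferMax] <;> try split_ifs
  all_goals
    first
    | exact absurd rfl hp
    | simp only [signedWeight, List.length_cons, List.map_cons, List.prod_cons, List.map_nil,
        List.prod_nil, List.length_nil, pow_succ]
      ring

def ChainPair.transfer {n : ℕ} (p : ChainPair n) : ChainPair n :=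
  ⟨transferMax p.1, isChainPair_transferMax p.2⟩

lemma ChainPair.transfer_involutive (n : ℕ) : Function.Involutive (@ChainPair.transfer n) :=
  fun p => Subtype.ext (transferMax_transferMax p.2.2.1 p.2.2.2.1)

lemma tsum_eq_zero_of_involutive_of_neg {α : Type*} {σ : α → α} (hσ : Function.Involutive σ)
    {g : α → ℝ} (hg : ∀ a, g (σ a) = -g a) : ∑' a, g a = 0 := by
  have h : ∑' a, g a = -∑' a, g a := by
    rw [← tsum_neg, ← (hσ.toPerm σ).tsum_eq g]
    exact tsum_congr hg
  linarith

lemma tsum_signedWeight_chainPair (f : ℕ → ℝ) (n : ℕ) :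
    ∑' p : ChainPair n, signedWeight f p.1 = if n = 0 then 1 else 0 := by
  split_ifs with hn
  · subst hn
    have hnil : ∀ p : ChainPair 0, p.1 = ([], []) := fun p => by
      have hlen := p.2.1
      exact Prod.ext (List.eq_nil_of_length_eq_zero (by omega))
        (List.eq_nil_of_length_eq_zero (by omega))
    rw [tsum_eq_single ⟨([], []), by simp [IsChainPair]⟩ fun p hp =>
      absurd (Subtype.ext (hnil p)) hp]
    simp [signedWeight]
  · refine tsum_eq_zero_of_involutive_of_neg (ChainPair.transfer_involutive n) fun p => ?_
    refine signedWeight_transferMax f fun h => hn ?_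
    simpa [h] using p.2.1.symm

end AlternatingConvolution

open AlternatingConvolution

theorem zeta_alternating_convolution (k : ℕ) (hk : 2 ≤ k) (n : ℕ) :
    ∑ i ∈ Finset.range (n + 1),
        (-1 : ℝ) ^ i * mzv (List.replicate i k) * mzvStar (List.replicate (n - i) k) =
      if n = 0 then 1 else 0 := by
  simp only [mzv_replicate, mzvStar_replicate]
  rw [sum_range_eq_tsum_signedWeight (fun x => by positivity)
      (Real.summable_nat_pow_inv.2 (by omega)), tsum_signedWeight_chainPair]
end

section
/- For any integer k ≥ 2 and any positive integer n, the alternating convolution sum over i from 0 to n of (-1)^i * t({k}^i) * t^⋆({k}^(n-i)) equals 0, where t and t^⋆ denote the multiple t-value and multiple t-star value. -/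
/-!
With `x m = m⁻ᵏ` on the odd positive integers, `t({k}^p)` and `t⋆({k}^q)` are the elementary
and complete homogeneous symmetric functions `e_p(x)` and `h_q(x)`. Split the product `e_p h_q`,
a sum over pairs `(a, b)` of a strictly and a weakly decreasing tuple, according to whether the
largest entry overall is the head of `a` or of `b`. Moving the head of `a` to the front of `b` is a
weight-preserving bijection from the first kind of pairs for `(p + 1, q)` onto the second kind for
`(p, q + 1)`, so the alternating sum telescopes to zero.
-/

open Finset

lemma Fin.strictAnti_cons {α : Type*} [Preorder α] {n : ℕ} {f : Fin n → α} {a : α} :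
    StrictAnti (Fin.cons a f : Fin (n + 1) → α) ↔ (∀ i, f i < a) ∧ StrictAnti f :=
  Fin.liftFun_cons (· > ·)

lemma Fin.antitone_cons {α : Type*} [Preorder α] {n : ℕ} {f : Fin n → α} {a : α} :
    Antitone (Fin.cons a f : Fin (n + 1) → α) ↔ (∀ i, f i ≤ a) ∧ Antitone f := by
  simp only [antitone_iff_forall_lt]
  exact Fin.liftFun_cons (· ≥ ·)

lemma summable_prod_fin_pi_of_nonneg {ι : Type*} {x : ι → ℝ} (hx0 : 0 ≤ x) (hx : Summable x)
    (n : ℕ) :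
    Summable fun a : Fin n → ι => ∏ i, x (a i) := by
  induction n with
  | zero => exact Summable.of_finite
  | succ n ih =>
    have hcons := hx.mul_of_nonneg ih hx0 fun a => prod_nonneg fun i _ => hx0 (a i)
    refine ((Fin.consEquiv fun _ => ι).symm.summable_iff.2 hcons).congr fun a => ?_
    simp [Fin.prod_univ_succ, Fin.consEquiv, Fin.tail]

lemma sum_range_neg_one_pow_mul_add_eq_zero {L T : ℕ → ℕ → ℝ} {n : ℕ} (hL : L 0 n = 0)
    (hT : T n 0 = 0) (hLT : ∀ i < n, L (i + 1) (n - (i + 1)) = T i (n - i)) :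
    ∑ i ∈ range (n + 1), (-1) ^ i * (L i (n - i) + T i (n - i)) = 0 := by
  set f : ℕ → ℝ := fun i => (-1) ^ i * L i (n - i)
  have hstep : ∀ i ∈ range n, (-1) ^ i * (L i (n - i) + T i (n - i)) = f i - f (i + 1) := by
    intro i hi
    simp only [f, ← hLT i (mem_range.1 hi), pow_succ]
    ring
  rw [sum_range_succ, sum_congr rfl hstep, sum_range_sub', Nat.sub_self, hT]
  simp [f, hL]

section SymmetricTsum

variable {α : Type*} [LinearOrder α]

noncomputable def esymmTsum (x : α → ℝ) (n : ℕ) : ℝ :=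
  ∑' a : {a : Fin n → α // StrictAnti a}, ∏ i, x (a.1 i)

noncomputable def hsymmTsum (x : α → ℝ) (n : ℕ) : ℝ :=
  ∑' b : {b : Fin n → α // Antitone b}, ∏ j, x (b.1 j)

variable (α) in
def LeadPairs (p q : ℕ) :
    Set ({a : Fin p → α // StrictAnti a} × {b : Fin q → α // Antitone b}) :=
  {z | ∃ i, ∀ j, z.2.1 j ≤ z.1.1 i}

lemma exists_forall_le_iff_forall_le_zero {p q : ℕ} {a : Fin (p + 1) → α} (ha : Antitone a)
    {b : Fin q → α} : (∃ i, ∀ j, b j ≤ a i) ↔ ∀ j, b j ≤ a 0 :=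
  ⟨fun ⟨i, h⟩ j => (h j).trans (ha (Fin.zero_le i)), fun h => ⟨0, h⟩⟩

lemma not_exists_forall_le_iff_forall_lt_zero {p q : ℕ} {a : Fin p → α}
    {b : Fin (q + 1) → α} (hb : Antitone b) : (¬∃ i, ∀ j, b j ≤ a i) ↔ ∀ i, a i < b 0 := by
  simp only [not_exists, not_forall, not_le]
  exact ⟨fun h i => let ⟨j, hj⟩ := h i; hj.trans_le (hb (Fin.zero_le j)), fun h i => ⟨0, h i⟩⟩

def leadPairsEquiv (p q : ℕ) : LeadPairs α (p + 1) q ≃ ↥(LeadPairs α p (q + 1))ᶜ where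
  toFun z :=
    have hb : Antitone (Fin.cons (z.1.1.1 0) z.1.2.1 : Fin (q + 1) → α) := Fin.antitone_cons.2
      ⟨(exists_forall_le_iff_forall_le_zero z.1.1.2.antitone).1 z.2, z.1.2.2⟩
    ⟨(⟨Fin.tail z.1.1.1, z.1.1.2.comp_strictMono Fin.strictMono_succ⟩, ⟨_, hb⟩),
      (not_exists_forall_le_iff_forall_lt_zero hb).2 fun i => z.1.1.2 (Fin.succ_pos i)⟩
  invFun z :=
    ⟨(⟨Fin.cons (z.1.2.1 0) z.1.1.1, Fin.strictAnti_cons.2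
        ⟨(not_exists_forall_le_iff_forall_lt_zero z.1.2.2).1 z.2, z.1.1.2⟩⟩,
      ⟨Fin.tail z.1.2.1, z.1.2.2.comp_monotone Fin.strictMono_succ.monotone⟩),
      ⟨0, fun j => z.1.2.2 (Fin.zero_le j.succ)⟩⟩
  left_inv z := by ext <;> simp
  right_inv z := by ext <;> simp

variable (x : α → ℝ)

noncomputable def leadSum (p q : ℕ) : ℝ :=
  ∑' z : LeadPairs α p q, (∏ i, x (z.1.1.1 i)) * ∏ j, x (z.1.2.1 j)

noncomputable def trailSum (p q : ℕ) : ℝ :=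
  ∑' z : ↥(LeadPairs α p q)ᶜ, (∏ i, x (z.1.1.1 i)) * ∏ j, x (z.1.2.1 j)

lemma leadSum_succ_left (p q : ℕ) : leadSum x (p + 1) q = trailSum x p (q + 1) := by
  rw [leadSum, trailSum, ← (leadPairsEquiv p q).tsum_eq]
  refine tsum_congr fun z => ?_
  simp only [leadPairsEquiv, Equiv.coe_fn_mk, Fin.prod_univ_succ, Fin.tail, Fin.cons_zero,
    Fin.cons_succ]
  ring

lemma leadSum_zero_left (q : ℕ) : leadSum x 0 q = 0 := by
  have : IsEmpty (LeadPairs α 0 q) := ⟨fun ⟨_, i, _⟩ => i.elim0⟩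
  exact tsum_empty

lemma trailSum_succ_zero (p : ℕ) : trailSum x (p + 1) 0 = 0 := by
  have : IsEmpty ↥(LeadPairs α (p + 1) 0)ᶜ := ⟨fun ⟨_, h⟩ => h ⟨0, fun j => j.elim0⟩⟩
  exact tsum_empty

variable {x}

lemma esymmTsum_mul_hsymmTsum (hx0 : 0 ≤ x) (hx : Summable x) (p q : ℕ) :
    esymmTsum x p * hsymmTsum x q = leadSum x p q + trailSum x p q := by
  have hprod0 {n : ℕ} (a : Fin n → α) : 0 ≤ ∏ i, x (a i) := prod_nonneg fun i _ => hx0 (a i)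
  have he : Summable fun a : {a : Fin p → α // StrictAnti a} => ∏ i, x (a.1 i) :=
    (summable_prod_fin_pi_of_nonneg hx0 hx p).comp_injective Subtype.val_injective
  have hh : Summable fun b : {b : Fin q → α // Antitone b} => ∏ j, x (b.1 j) :=
    (summable_prod_fin_pi_of_nonneg hx0 hx q).comp_injective Subtype.val_injective
  have hpair := he.mul_of_nonneg hh (fun a => hprod0 a.1) (fun b => hprod0 b.1)
  rw [esymmTsum, hsymmTsum, he.tsum_mul_tsum hh hpair]
  exact (hpair.tsum_subtype_add_tsum_subtype_compl _).symm

theorem sum_range_neg_one_pow_mul_esymmTsum_mul_hsymmTsum (hx0 : 0 ≤ x) (hx : Summable x)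
    {n : ℕ} (hn : n ≠ 0) :
    ∑ i ∈ range (n + 1), (-1) ^ i * esymmTsum x i * hsymmTsum x (n - i) = 0 := by
  obtain ⟨m, rfl⟩ := Nat.exists_eq_succ_of_ne_zero hn
  simp only [mul_assoc, esymmTsum_mul_hsymmTsum hx0 hx]
  refine sum_range_neg_one_pow_mul_add_eq_zero (leadSum_zero_left x _)
    (trailSum_succ_zero x m) fun i hi => ?_
  rw [← Nat.sub_add_cancel (Nat.sub_pos_of_lt hi), ← leadSum_succ_left, Nat.sub_sub]

end SymmetricTsum

def oddPosTupleEquiv {ι : Type*} {Q : (ι → {m : ℕ // 0 < m ∧ Odd m}) → Prop}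
    {P : (ι → ℕ) → Prop} (h : ∀ a, Q a ↔ P (Subtype.val ∘ a)) :
    {a // Q a} ≃ {m : ι → ℕ // P m ∧ (∀ i, 0 < m i) ∧ ∀ i, Odd (m i)} where
  toFun a := ⟨fun i => a.1 i, (h a.1).1 a.2, fun i => (a.1 i).2.1, fun i => (a.1 i).2.2⟩
  invFun m := ⟨fun i => ⟨m.1 i, m.2.2.1 i, m.2.2.2 i⟩, (h _).2 m.2.1⟩

lemma mtv_replicate (k n : ℕ) :
    mtv (List.replicate n k) =
      esymmTsum (fun m : {m : ℕ // 0 < m ∧ Odd m} => ((m : ℝ) ^ k)⁻¹) n := by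
  conv_rhs => rw [← List.length_replicate (n := n) (a := k)]
  simp only [mtv, esymmTsum, List.get_eq_getElem, List.getElem_replicate]
  exact ((oddPosTupleEquiv fun _ => Iff.rfl).tsum_eq _).symm

lemma mtvStar_replicate (k n : ℕ) :
    mtvStar (List.replicate n k) =
      hsymmTsum (fun m : {m : ℕ // 0 < m ∧ Odd m} => ((m : ℝ) ^ k)⁻¹) n := by
  conv_rhs => rw [← List.length_replicate (n := n) (a := k)]
  simp only [mtvStar, hsymmTsum, List.get_eq_getElem, List.getElem_replicate]
  exact ((oddPosTupleEquiv fun _ => antitone_iff_forall_lt).tsum_eq _).symm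

theorem t_alternating_convolution (k : ℕ) (hk : 2 ≤ k) (n : ℕ) (hn : 1 ≤ n) :
    ∑ i ∈ Finset.range (n + 1),
        (-1 : ℝ) ^ i * mtv (List.replicate i k) * mtvStar (List.replicate (n - i) k) = 0 := by
  simp only [mtv_replicate, mtvStar_replicate]
  exact sum_range_neg_one_pow_mul_esymmTsum_mul_hsymmTsum (fun _ => by dsimp; positivity)
    ((Real.summable_nat_pow_inv.2 hk).subtype _) (by omega)
end
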